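/- arXiv:1811.08528 — 7 statements merged into one kernel-verified Lean document; each statement's English description precedes it below -/
import Mathlib

section
/- With posterior terms as above and a bijection $\sigma:[2N]\to\Pi$, for any bijection $\sigma$ there exists a subset $A\subseteq[N]$ such that $A$ and $\sigma$ are posterior-respecting; moreover the number of such subsets $A$ equals $2^c$, where $c$ is the number of connected components of the graph $\mathcal{G}_\sigma$. -/
open scoped Classical

noncomputable section

/-- The posterior term: `(k, false) ↦ ε·p(k)` and `(k, true) ↦ (1-ε)·p(k)`. -/
def pt (N : ℕ) (p : Fin N → ℝ) (ε : ℝ) : Fin N × Bool → ℝ :=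
  fun x => (if x.2 then 1 - ε else ε) * p x.1

/-- The set `Π` of all `2N` posterior terms. -/
def PiAll (N : ℕ) (p : Fin N → ℝ) (ε : ℝ) : Set ℝ := Set.range (pt N p ε)

/-- The posterior set `Π_A^1 = {(1-ε)p(k) : k ∈ A} ∪ {ε p(k) : k ∉ A}`. -/
def Pi1 (N : ℕ) (p : Fin N → ℝ) (ε : ℝ) (A : Finset (Fin N)) : Set ℝ :=
  {x | ∃ k : Fin N, (k ∈ A ∧ x = pt N p ε (k, true)) ∨ (k ∉ A ∧ x = pt N p ε (k, false))}

/-- The posterior set `Π_A^0 = Π \ Π_A^1`. -/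
def Pi0 (N : ℕ) (p : Fin N → ℝ) (ε : ℝ) (A : Finset (Fin N)) : Set ℝ :=
  PiAll N p ε \ Pi1 N p ε A

/-- The posterior set `Π_A^y`. -/
def PiY (N : ℕ) (p : Fin N → ℝ) (ε : ℝ) (A : Finset (Fin N)) (y : Bool) : Set ℝ :=
  if y then Pi1 N p ε A else Pi0 N p ε A

/-- Index `2k-1` (1-based), i.e. `2k` (0-based), of the `k`-th σ-sibling pair. -/
def i0 {N : ℕ} (k : Fin N) : Fin (2 * N) := ⟨2 * k.1, by have := k.isLt; omega⟩

/-- Index `2k` (1-based), i.e. `2k+1` (0-based), of the `k`-th σ-sibling pair. -/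
def i1 {N : ℕ} (k : Fin N) : Fin (2 * N) := ⟨2 * k.1 + 1, by have := k.isLt; omega⟩

/-- `A` and the bijection `σ : [2N] → Π` are posterior-respecting: no σ-sibling pair
`{σ(2k-1), σ(2k)}` is contained in a single posterior set `Π_A^y`. -/
def PR (N : ℕ) (p : Fin N → ℝ) (ε : ℝ) (σ : Fin (2 * N) → ℝ) (A : Finset (Fin N)) : Prop :=
  ∀ (k : Fin N) (y : Bool), ¬(({σ (i0 k), σ (i1 k)} : Set ℝ) ⊆ PiY N p ε A y)

/-- The graph `𝒢_σ` on the posterior terms (identified with their indices in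
`Fin N × Bool` via the injection `pt`), with posterior-sibling edges (same `k`)
and σ-sibling edges (`{σ(2k-1), σ(2k)}`). -/
def Gsig (N : ℕ) (p : Fin N → ℝ) (ε : ℝ) (σ : Fin (2 * N) → ℝ) :
    SimpleGraph (Fin N × Bool) :=
  SimpleGraph.fromRel (fun u v => u.1 = v.1 ∨ ∃ k : Fin N,
    ({pt N p ε u, pt N p ε v} : Set ℝ) = {σ (i0 k), σ (i1 k)})

/-- The zigzag partition: indices that are odd in the 1-based ordering
(`k.1` even in the 0-based ordering). -/
def AZZ (N : ℕ) : Finset (Fin N) := Finset.univ.filter (fun k => k.1 % 2 = 0)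

/-!
Colour each posterior term `v` by the `y` with `v ∈ Π_A^y`. Posterior siblings always get
different colours, a colouring separating posterior siblings determines `A`, and `A` is
posterior-respecting exactly when `σ`-siblings get different colours too. So the
posterior-respecting sets are the proper 2-colourings of `𝒢_σ`.

`𝒢_σ` is the union of two perfect matchings, given by fixed-point-free involutions `s` and `t`.
Since `s` conjugates `t * s` to its inverse, a cycle of `t * s` through both `v` and `s v` would
contain a fixed point of `s` or of `t`; hence `s` swaps the cycles of `t * s` in pairs, and
colouring one cycle of each pair `true` gives a 2-colouring. Once one 2-colouring `π` exists,
a 2-colouring `χ` is determined by the set where `χ = π`, which can be any union of connected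
components: there are `2 ^ c` of them.
-/

open Function

namespace Equiv.Perm

variable {V : Type*} {s t : Perm V}

theorem not_sameCycle_mul_apply_self (hs : Involutive s) (ht : Involutive t)
    (hs' : ∀ v, s v ≠ v) (ht' : ∀ v, t v ≠ v) (v : V) : ¬(t * s).SameCycle v (s v) := by
  set φ := t * s with hφ
  have hsφ : SemiconjBy s φ φ⁻¹ := by
    ext w
    change s (t (s w)) = φ⁻¹ (s w)
    rw [eq_comm, inv_eq_iff_eq, hφ, mul_apply, hs, ht]
  rintro ⟨n, hn⟩
  -- `s` reverses the orbit segment from `v` to `s v = φ ^ n v`; its midpoint is fixed by `s`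
  -- (for even `n`) or its two middle points are swapped by `t` (for odd `n`)
  have hmid : ∀ m : ℤ, s ((φ ^ m) v) = (φ ^ (n - m)) v := fun m => by
    have := congrArg (· v) (hsφ.zpow_right m).eq
    simp only [mul_apply, inv_zpow'] at this
    rw [this, ← hn, ← mul_apply, ← zpow_add, neg_add_eq_sub]
  obtain ⟨m, rfl | rfl⟩ := Int.even_or_odd' n
  · exact hs' _ (by rw [hmid, show 2 * m - m = m by ring])
  · have h := hmid m
    rw [show 2 * m + 1 - m = 1 + m by ring, zpow_one_add, mul_apply, hφ, mul_apply] at h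
    exact ht' _ h.symm

theorem exists_bool_flip (hs : Involutive s) (ht : Involutive t)
    (hs' : ∀ v, s v ≠ v) (ht' : ∀ v, t v ≠ v) :
    ∃ π : V → Bool, ∀ v, π (s v) = !π v ∧ π (t v) = !π v := by
  let q : V → Quotient (SameCycle.setoid (t * s)) := Quotient.mk _
  let _ : LinearOrder (Quotient (SameCycle.setoid (t * s))) :=
    IsWellOrder.linearOrder WellOrderingRel
  have hq_ne : ∀ v, q v ≠ q (s v) := fun v h =>
    not_sameCycle_mul_apply_self hs ht hs' ht' v (Quotient.exact h)
  have hq_mul : ∀ w, q ((t * s) w) = q w := fun w =>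
    Quotient.sound ((SameCycle.refl (t * s) w).apply_right.symm : (t * s).SameCycle _ w)
  have hq_t : ∀ v, q (t v) = q (s v) := fun v => by
    rw [← hq_mul (s v), mul_apply, hs]
  have hq_st : ∀ v, q (s (t v)) = q v := fun v => by
    rw [← hq_mul (s (t v)), mul_apply, hs, ht]
  have hflip : ∀ {a b : Quotient (SameCycle.setoid (t * s))}, a ≠ b →
      decide (b < a) = !decide (a < b) := by
    intro a b hab
    rcases hab.lt_or_gt with h | h <;> simp [h, not_lt_of_gt]
  refine ⟨fun v => decide (q v < q (s v)), fun v => ⟨?_, ?_⟩⟩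
  · simp only [hs v]; exact hflip (hq_ne v)
  · simp only [hq_t, hq_st]; exact hflip (hq_ne v)

end Equiv.Perm

namespace SimpleGraph

variable {V : Type*} {G : SimpleGraph V}

@[simp]
theorem Coloring.mk_apply {α : Type*} (c : V → α) (h : ∀ {v w}, G.Adj v w → c v ≠ c w)
    (v : V) :
    Coloring.mk c h v = c v :=
  rfl

theorem Coloring.xor_eq_of_reachable (χ π : G.Coloring Bool) {u v : V} (h : G.Reachable u v) :
    xor (χ u) (π u) = xor (χ v) (π v) := by
  rw [reachable_iff_reflTransGen] at h
  induction h with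
  | refl => rfl
  | tail _ hadj ih =>
    rw [ih, Bool.eq_not.2 (χ.valid hadj).symm, Bool.eq_not.2 (π.valid hadj).symm]
    simp

def Coloring.boolEquiv (π : G.Coloring Bool) :
    G.Coloring Bool ≃ (G.ConnectedComponent → Bool) where
  toFun χ := ConnectedComponent.lift (fun v => xor (χ v) (π v))
    fun _ _ p _ => χ.xor_eq_of_reachable π p.reachable
  invFun d := Coloring.mk (fun v => xor (d (G.connectedComponentMk v)) (π v)) fun {u v} huv => by
    rw [ConnectedComponent.connectedComponentMk_eq_of_adj huv]
    simpa using π.valid huv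
  left_inv χ := RelHom.ext fun v => by simp only [Coloring.mk_apply]; simp
  right_inv d := funext fun c => by
    induction c using ConnectedComponent.ind
    simp

theorem Coloring.card_bool [Finite V] (π : G.Coloring Bool) :
    Nat.card (G.Coloring Bool) = 2 ^ Nat.card G.ConnectedComponent := by
  simp [Nat.card_congr π.boolEquiv, Nat.card_fun]

theorem nonempty_coloring_bool_of_adj {s t : Equiv.Perm V} (hs : Involutive s)
    (ht : Involutive t) (hs' : ∀ v, s v ≠ v) (ht' : ∀ v, t v ≠ v)
    (h : ∀ u v, G.Adj u v → v = s u ∨ v = t u) :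
    Nonempty (G.Coloring Bool) := by
  obtain ⟨π, hπ⟩ := Equiv.Perm.exists_bool_flip hs ht hs' ht'
  refine ⟨Coloring.mk π fun {u v} huv => ?_⟩
  rcases h u v huv with rfl | rfl <;> simp [hπ]

end SimpleGraph

section Posterior

variable {N : ℕ} {p : Fin N → ℝ} {ε : ℝ} {σ : Fin (2 * N) → ℝ}

def sibling (N : ℕ) : Equiv.Perm (Fin N × Bool) := (Equiv.refl _).prodCongr Equiv.boolNot

@[simp]
theorem sibling_apply (v : Fin N × Bool) : sibling N v = (v.1, !v.2) :=
  rfl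

theorem sibling_involutive : Involutive (sibling N) := fun v => by simp

theorem sibling_ne (v : Fin N × Bool) : sibling N v ≠ v := fun h => by
  simpa using congrArg Prod.snd h

theorem eq_sibling_of_fst_eq {u v : Fin N × Bool} (h : u.1 = v.1) (hne : u ≠ v) :
    v = sibling N u := by
  obtain ⟨k, a⟩ := u
  obtain ⟨k', b⟩ := v
  cases a <;> cases b <;> simp_all

def pairIndex (N : ℕ) : Fin N × Bool ≃ Fin (2 * N) :=
  ((Equiv.refl _).prodCongr finTwoEquiv.symm).trans
    (finProdFinEquiv.trans (finCongr (Nat.mul_comm N 2)))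

theorem pairIndex_false (k : Fin N) : pairIndex N (k, false) = i0 k :=
  Fin.ext (by simp [pairIndex, finTwoEquiv, i0])

theorem pairIndex_true (k : Fin N) : pairIndex N (k, true) = i1 k :=
  Fin.ext (by simp [pairIndex, finTwoEquiv, i1]; ring)

theorem Gsig_adj_iff {u v : Fin N × Bool} : (Gsig N p ε σ).Adj u v ↔
    u ≠ v ∧
      (u.1 = v.1 ∨ ∃ k, ({pt N p ε u, pt N p ε v} : Set ℝ) = {σ (i0 k), σ (i1 k)}) := by
  rw [Gsig, SimpleGraph.fromRel_adj, Set.pair_comm (pt N p ε v), eq_comm (a := v.1), or_self]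

theorem Gsig_adj_sibling (v : Fin N × Bool) : (Gsig N p ε σ).Adj v (sibling N v) :=
  Gsig_adj_iff.2 ⟨(sibling_ne v).symm, Or.inl rfl⟩

theorem exists_involution_Gsig_adj (hinj : Injective (pt N p ε)) (hσinj : Injective σ)
    (hσr : Set.range σ = PiAll N p ε) :
    ∃ t : Equiv.Perm (Fin N × Bool), Involutive t ∧ (∀ v, t v ≠ v) ∧
      ∀ u v, (Gsig N p ε σ).Adj u v → v = sibling N u ∨ v = t u := by
  let e : Fin (2 * N) ≃ Fin N × Bool := (Equiv.ofInjective σ hσinj).trans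
    ((Equiv.setCongr hσr).trans (Equiv.ofInjective _ hinj).symm)
  have he : ∀ j, pt N p ε (e j) = σ j := fun j => Equiv.apply_ofInjective_symm hinj _
  -- `f` lists the posterior terms in the order of `σ`, so the `σ`-siblings are `f`-conjugate
  -- to the posterior siblings
  let f : Equiv.Perm (Fin N × Bool) := (pairIndex N).trans e
  refine ⟨f * sibling N * f⁻¹, fun v => by simp, fun v h => ?_, fun u v huv => ?_⟩
  · exact sibling_ne (f⁻¹ v) (f.injective (by simpa using h))
  obtain ⟨hne, hfst | ⟨k, hk⟩⟩ := Gsig_adj_iff.1 huv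
  · exact Or.inl (eq_sibling_of_fst_eq hfst hne)
  right
  rw [← pairIndex_false, ← pairIndex_true, ← he, ← he, Set.pair_eq_pair_iff, hinj.eq_iff,
    hinj.eq_iff, hinj.eq_iff, hinj.eq_iff] at hk
  rcases hk with ⟨rfl, rfl⟩ | ⟨rfl, rfl⟩ <;> simp [f]

def postColor (N : ℕ) (p : Fin N → ℝ) (ε : ℝ) (A : Finset (Fin N)) (v : Fin N × Bool) :
    Bool :=
  decide (pt N p ε v ∈ Pi1 N p ε A)

theorem pt_mem_PiY_iff {A : Finset (Fin N)} {v : Fin N × Bool} {y : Bool} :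
    pt N p ε v ∈ PiY N p ε A y ↔ postColor N p ε A v = y := by
  cases y <;> simp [PiY, Pi0, PiAll, postColor]

theorem postColor_apply (hinj : Injective (pt N p ε)) (A : Finset (Fin N)) (v : Fin N × Bool) :
    postColor N p ε A v = (v.2 == decide (v.1 ∈ A)) := by
  obtain ⟨k, _ | _⟩ := v <;> simp [postColor, Pi1, hinj.eq_iff]

theorem postColor_sibling (hinj : Injective (pt N p ε)) (A : Finset (Fin N)) (v : Fin N × Bool) :
    postColor N p ε A (sibling N v) = !postColor N p ε A v := by
  obtain ⟨k, _ | _⟩ := v <;> simp [postColor_apply hinj]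

theorem forall_not_pair_subset_PiY_iff {A : Finset (Fin N)} {u v : Fin N × Bool} :
    (∀ y, ¬({pt N p ε u, pt N p ε v} : Set ℝ) ⊆ PiY N p ε A y) ↔
      postColor N p ε A u ≠ postColor N p ε A v := by
  simp [Set.insert_subset_iff, pt_mem_PiY_iff, ne_comm]

theorem PR_iff_forall_adj (hinj : Injective (pt N p ε)) (hσinj : Injective σ)
    (hσr : Set.range σ = PiAll N p ε) {A : Finset (Fin N)} :
    PR N p ε σ A ↔
      ∀ u v, (Gsig N p ε σ).Adj u v → postColor N p ε A u ≠ postColor N p ε A v := by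
  constructor
  · intro hA u v huv
    obtain ⟨hne, hfst | ⟨k, hk⟩⟩ := Gsig_adj_iff.1 huv
    · rw [eq_sibling_of_fst_eq hfst hne, postColor_sibling hinj]
      exact Bool.self_ne_not _
    · exact forall_not_pair_subset_PiY_iff.1 (hk ▸ hA k)
  · intro hA k
    have hσ : ∀ j, ∃ v, pt N p ε v = σ j := fun j => hσr.subset (Set.mem_range_self j)
    obtain ⟨u, hu⟩ := hσ (i0 k)
    obtain ⟨v, hv⟩ := hσ (i1 k)
    have hne : u ≠ v := by
      rintro rfl
      have := congrArg Fin.val (hσinj (hu.symm.trans hv))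
      simp [i0, i1] at this
    rw [← hu, ← hv]
    exact forall_not_pair_subset_PiY_iff.2
      (hA u v (Gsig_adj_iff.2 ⟨hne, Or.inr ⟨k, by rw [hu, hv]⟩⟩))

theorem postColor_filter_coloring (hinj : Injective (pt N p ε))
    (χ : (Gsig N p ε σ).Coloring Bool) :
    postColor N p ε (Finset.univ.filter fun k => χ (k, true)) = χ := by
  funext ⟨k, b⟩
  have hχ := χ.valid (Gsig_adj_sibling (k, true))
  rw [postColor_apply hinj]
  cases b
  · simpa using Bool.eq_not.2 hχ
  · simp

def prEquivColoring (hinj : Injective (pt N p ε)) (hσinj : Injective σ)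
    (hσr : Set.range σ = PiAll N p ε) :
    {A : Finset (Fin N) // PR N p ε σ A} ≃ (Gsig N p ε σ).Coloring Bool where
  toFun A := SimpleGraph.Coloring.mk (postColor N p ε A) fun huv =>
    (PR_iff_forall_adj hinj hσinj hσr).1 A.2 _ _ huv
  invFun χ := ⟨Finset.univ.filter fun k => χ (k, true),
    (PR_iff_forall_adj hinj hσinj hσr).2 fun u v huv => by
      rw [postColor_filter_coloring hinj]
      exact χ.valid huv⟩
  left_inv A := Subtype.ext (by ext k; simp [postColor_apply hinj])
  right_inv χ := RelHom.ext fun v => by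
    rw [SimpleGraph.Coloring.mk_apply, postColor_filter_coloring hinj]

end Posterior

theorem stmt5_general (N : ℕ) (p : Fin N → ℝ) (ε : ℝ)
    (hinj : Function.Injective (pt N p ε))
    (σ : Fin (2 * N) → ℝ) (hσinj : Function.Injective σ)
    (hσr : Set.range σ = PiAll N p ε) :
    (∃ A : Finset (Fin N), PR N p ε σ A) ∧
      Nat.card {A : Finset (Fin N) // PR N p ε σ A} =
        2 ^ Nat.card (Gsig N p ε σ).ConnectedComponent := by
  obtain ⟨t, ht, ht', hadj⟩ := exists_involution_Gsig_adj hinj hσinj hσr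
  obtain ⟨π⟩ :=
    SimpleGraph.nonempty_coloring_bool_of_adj sibling_involutive ht sibling_ne ht' hadj
  let E := prEquivColoring hinj hσinj hσr
  exact ⟨⟨_, (E.symm π).2⟩, by rw [Nat.card_congr E, π.card_bool]⟩

/-- **(Statement 5.)** For any bijection `σ : [2N] → Π` there exists a partition `A`
which is posterior-respecting with `σ`; moreover the number of such `A` is `2 ^ c`,
where `c` is the number of connected components of `𝒢_σ`. -/
theorem stmt5 (N : ℕ) (hN : 1 ≤ N) (p : Fin N → ℝ) (hp : ∀ k, p k ∈ Set.Ioo (0:ℝ) 1)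
    (hsum : ∑ k, p k = 1) (ε : ℝ) (hε0 : 0 < ε) (hε : ε < 1 / 2)
    (hinj : Function.Injective (pt N p ε))
    (σ : Fin (2 * N) → ℝ) (hσinj : Function.Injective σ)
    (hσr : Set.range σ = PiAll N p ε) :
    (∃ A : Finset (Fin N), PR N p ε σ A) ∧
      Nat.card {A : Finset (Fin N) // PR N p ε σ A} =
        2 ^ Nat.card (Gsig N p ε σ).ConnectedComponent :=
  stmt5_general N p ε hinj σ hσinj hσr
end
end

section
/- With posterior terms as above, a bijection $\sigma:[2N]\to\Pi$ is induced by a subset $A\subseteq[N]$ (i.e., $\{\sigma(2k-1),\sigma(2k)\}=\{\pi_A^0(k),\pi_A^1(k)\}$ for all $k\in[N]$) if and only if $A$ and $\sigma$ are posterior-respecting and order-preserving. -/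
open scoped Classical

noncomputable section

/-!
Write `S y` for `Π_A^y`: the two classes are disjoint and cover `Π`. If `σ` is induced by `A`,
the `k`-th σ-pair is `{π_A^0(k), π_A^1(k)}`, so it meets both classes, and since the pair index
grows with the position in `σ`, the elements of one class occur in `σ` in descending order.
Conversely, if every σ-pair meets both classes, choosing from the `k`-th pair its element of
class `y` gives, by order preservation, a strictly decreasing sequence of `N` elements of `Π_A^y`;
a strictly decreasing enumeration of an `N`-element set is unique, so this sequence is `π_A^y`.
-/

open Set Function

section PairIndex

variable {N : ℕ}

def pairIdx (i : Fin (2 * N)) : Fin N := ⟨i / 2, by omega⟩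

lemma pairIdx_eq_iff {i : Fin (2 * N)} {k : Fin N} : pairIdx i = k ↔ i = i0 k ∨ i = i1 k := by
  simp only [pairIdx, i0, i1, Fin.ext_iff]
  omega

lemma pairIdx_mono : Monotone (pairIdx (N := N)) := fun _ _ hij =>
  Nat.div_le_div_right (c := 2) hij

lemma lt_of_pairIdx_lt {i j : Fin (2 * N)} (h : pairIdx i < pairIdx j) : i < j := by
  simp only [pairIdx, Fin.lt_def] at h ⊢
  omega

lemma mem_pair_pairIdx {α : Type*} (f : Fin (2 * N) → α) (i : Fin (2 * N)) :
    f i ∈ ({f (i0 (pairIdx i)), f (i1 (pairIdx i))} : Set α) := by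
  rcases pairIdx_eq_iff.1 (rfl : pairIdx i = pairIdx i) with h | h <;>
    rw [← h] <;> simp

lemma pair_eq_of_pairIdx_eq {α : Type*} (f : Fin (2 * N) → α) {i i' : Fin (2 * N)} {k : Fin N}
    (hi : pairIdx i = k) (hi' : pairIdx i' = k) (hne : i ≠ i') :
    ({f (i0 k), f (i1 k)} : Set α) = {f i, f i'} := by
  rcases pairIdx_eq_iff.1 hi with rfl | rfl <;> rcases pairIdx_eq_iff.1 hi' with rfl | rfl
  · exact absurd rfl hne
  · rfl
  · exact pair_comm _ _
  · exact absurd rfl hne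

end PairIndex

lemma StrictAnti.eq_of_range_subset {β α : Type*} [LinearOrder β] [Finite β] [LinearOrder α]
    {f g : β → α} (hf : StrictAnti f) (hg : StrictAnti g) (h : range f ⊆ range g) : f = g := by
  refine (hf.range_inj hg).1 (eq_of_subset_of_ncard_le h ?_)
  rw [ncard_range_of_injective hf.injective, ncard_range_of_injective hg.injective]

lemma Pairwise.eq_of_mem_of_mem {ι α : Type*} {S : ι → Set α} (hS : Pairwise (Disjoint on S))
    {x : α} {y y' : ι} (hx : x ∈ S y) (hx' : x ∈ S y') : y = y' :=
  (hS.pairwiseDisjoint univ).elim_set trivial trivial x hx hx'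

section Induced

variable {α : Type*} {N : ℕ} {S : Bool → Set α} {σ : Fin (2 * N) → α}
  {π : Bool → Fin N → α}

lemma eq_of_mem_pair_of_mem (hS : Pairwise (Disjoint on S)) (hπS : ∀ y k, π y k ∈ S y)
    {x : α} {k : Fin N} {y : Bool} (hx : x ∈ ({π false k, π true k} : Set α)) (hxS : x ∈ S y) :
    x = π y k := by
  rcases hx with rfl | rfl
  · rw [hS.eq_of_mem_of_mem hxS (hπS false k)]
  · rw [hS.eq_of_mem_of_mem hxS (hπS true k)]

theorem respecting_of_induced (hS : Pairwise (Disjoint on S)) (hπS : ∀ y k, π y k ∈ S y)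
    (h : ∀ k, ({σ (i0 k), σ (i1 k)} : Set α) = {π false k, π true k}) (k : Fin N) (y : Bool) :
    ¬({σ (i0 k), σ (i1 k)} : Set α) ⊆ S y := by
  intro hsub
  have hmem : π (!y) k ∈ ({σ (i0 k), σ (i1 k)} : Set α) := by
    rw [h k]; cases y <;> simp
  exact Bool.not_ne_self y (hS.eq_of_mem_of_mem (hsub hmem) (hπS (!y) k)).symm

theorem orderPreserving_of_induced [LinearOrder α] (hS : Pairwise (Disjoint on S))
    (hσ : Injective σ) (hπ : ∀ y, StrictAnti (π y)) (hπS : ∀ y k, π y k ∈ S y)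
    (h : ∀ k, ({σ (i0 k), σ (i1 k)} : Set α) = {π false k, π true k})
    {i j : Fin (2 * N)} {y : Bool} (hij : i < j) (hi : σ i ∈ S y) (hj : σ j ∈ S y) :
    σ j < σ i := by
  have hσπ : ∀ m, σ m ∈ S y → σ m = π y (pairIdx m) := fun m hm =>
    eq_of_mem_pair_of_mem hS hπS (h _ ▸ mem_pair_pairIdx σ m) hm
  rcases (pairIdx_mono hij.le).lt_or_eq with hlt | heq
  · rw [hσπ i hi, hσπ j hj]
    exact hπ y hlt
  · exact absurd (hσ ((hσπ i hi).trans (heq ▸ hσπ j hj).symm)) hij.ne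

theorem induced_of_respecting_of_orderPreserving [LinearOrder α]
    (hS : Pairwise (Disjoint on S)) (hcover : ∀ i, ∃ y, σ i ∈ S y) (hπ : ∀ y, StrictAnti (π y))
    (hπr : ∀ y, range (π y) = S y)
    (hresp : ∀ k y, ¬({σ (i0 k), σ (i1 k)} : Set α) ⊆ S y)
    (hord : ∀ i j y, i < j → σ i ∈ S y → σ j ∈ S y → σ j < σ i) (k : Fin N) :
    ({σ (i0 k), σ (i1 k)} : Set α) = {π false k, π true k} := by
  have hmeet : ∀ y k, ∃ m, pairIdx m = k ∧ σ m ∈ S y := by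
    intro y k
    obtain ⟨x, hx, hxS⟩ := not_subset.1 (hresp k (!y))
    obtain ⟨m, hm, rfl⟩ : ∃ m, pairIdx m = k ∧ σ m = x := by
      rcases hx with rfl | rfl
      exacts [⟨i0 k, pairIdx_eq_iff.2 (Or.inl rfl), rfl⟩,
        ⟨i1 k, pairIdx_eq_iff.2 (Or.inr rfl), rfl⟩]
    obtain ⟨y', hy'⟩ := hcover m
    refine ⟨m, hm, ?_⟩
    cases y <;> cases y' <;> simp_all
  choose m hmk hmS using hmeet
  have hanti : ∀ y, StrictAnti (σ ∘ m y) := fun y a b hab =>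
    hord _ _ y (lt_of_pairIdx_lt (by rwa [hmk, hmk])) (hmS y a) (hmS y b)
  have hπ_eq : ∀ y, σ ∘ m y = π y := fun y =>
    (hanti y).eq_of_range_subset (hπ y) (by rw [hπr]; exact range_subset_iff.2 (hmS y))
  have hne : m false k ≠ m true k := fun he =>
    Bool.false_ne_true (hS.eq_of_mem_of_mem (hmS false k) (he ▸ hmS true k))
  rw [pair_eq_of_pairIdx_eq σ (hmk false k) (hmk true k) hne, ← hπ_eq false, ← hπ_eq true]
  rfl

theorem induced_iff_respecting_and_orderPreserving [LinearOrder α]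
    (hS : Pairwise (Disjoint on S)) (hcover : ∀ i, ∃ y, σ i ∈ S y) (hσ : Injective σ)
    (hπ : ∀ y, StrictAnti (π y)) (hπr : ∀ y, range (π y) = S y) :
    (∀ k, ({σ (i0 k), σ (i1 k)} : Set α) = {π false k, π true k}) ↔
      ((∀ k y, ¬({σ (i0 k), σ (i1 k)} : Set α) ⊆ S y) ∧
        ∀ i j y, i < j → σ i ∈ S y → σ j ∈ S y → σ j < σ i) := by
  have hπS' : ∀ y k, π y k ∈ S y := fun y k => hπr y ▸ mem_range_self k
  refine ⟨fun h => ⟨respecting_of_induced hS hπS' h, ?_⟩, fun ⟨hresp, hord⟩ =>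
    induced_of_respecting_of_orderPreserving hS hcover hπ hπr hresp hord⟩
  exact fun i j y hij => orderPreserving_of_induced hS hσ hπ hπS' h hij

end Induced

lemma pairwise_disjoint_PiY (N : ℕ) (p : Fin N → ℝ) (ε : ℝ) (A : Finset (Fin N)) :
    Pairwise (Disjoint on PiY N p ε A) := by
  intro y y' hne
  cases y <;> cases y'
  · exact absurd rfl hne
  · exact disjoint_sdiff_left
  · exact disjoint_sdiff_right
  · exact absurd rfl hne

lemma exists_mem_PiY_of_mem_PiAll {N : ℕ} {p : Fin N → ℝ} {ε : ℝ} (A : Finset (Fin N)) {x : ℝ}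
    (hx : x ∈ PiAll N p ε) : ∃ y, x ∈ PiY N p ε A y := by
  by_cases h : x ∈ Pi1 N p ε A
  exacts [⟨true, h⟩, ⟨false, hx, h⟩]

theorem stmt6_general (N : ℕ) (p : Fin N → ℝ) (ε : ℝ) (A : Finset (Fin N))
    (σ : Fin (2 * N) → ℝ) (hσinj : Function.Injective σ)
    (hσr : Set.range σ = PiAll N p ε)
    (πA : Bool → Fin N → ℝ) (hπanti : ∀ y, StrictAnti (πA y))
    (hπr : ∀ y, Set.range (πA y) = PiY N p ε A y) :
    (∀ k : Fin N, ({σ (i0 k), σ (i1 k)} : Set ℝ) = {πA false k, πA true k}) ↔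
      (PR N p ε σ A ∧
        ∀ (i j : Fin (2 * N)) (y : Bool), i < j →
          σ i ∈ PiY N p ε A y → σ j ∈ PiY N p ε A y → σ j < σ i) :=
  induced_iff_respecting_and_orderPreserving (pairwise_disjoint_PiY N p ε A)
    (fun i => exists_mem_PiY_of_mem_PiAll A (hσr ▸ mem_range_self i)) hσinj hπanti hπr

/-- **(Statement 6.)** A bijection `σ : [2N] → Π` is induced by `A`
(`{σ(2k-1), σ(2k)} = {π_A^0(k), π_A^1(k)}` for all `k`) iff `A` and `σ` are
posterior-respecting and order-preserving. Here `π_A^y` is the strictly descending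
enumeration of `Π_A^y`. -/
theorem stmt6 (N : ℕ) (hN : 1 ≤ N) (p : Fin N → ℝ) (hp : ∀ k, p k ∈ Set.Ioo (0:ℝ) 1)
    (hsum : ∑ k, p k = 1) (ε : ℝ) (hε0 : 0 < ε) (hε : ε < 1 / 2)
    (hinj : Function.Injective (pt N p ε))
    (A : Finset (Fin N))
    (σ : Fin (2 * N) → ℝ) (hσinj : Function.Injective σ)
    (hσr : Set.range σ = PiAll N p ε)
    (πA : Bool → Fin N → ℝ) (hπanti : ∀ y, StrictAnti (πA y))
    (hπr : ∀ y, Set.range (πA y) = PiY N p ε A y) :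
    (∀ k : Fin N, ({σ (i0 k), σ (i1 k)} : Set ℝ) = {πA false k, πA true k}) ↔
      (PR N p ε σ A ∧
        ∀ (i j : Fin (2 * N)) (y : Bool), i < j →
          σ i ∈ PiY N p ε A y → σ j ∈ PiY N p ε A y → σ j < σ i) :=
  stmt6_general N p ε A σ hσinj hσr πA hπanti hπr
end
end

section
/- Let $\sigma^{\downarrow}:[2N]\to\Pi$ be the unique bijection with $\sigma^{\downarrow}(1)>\sigma^{\downarrow}(2)>\cdots>\sigma^{\downarrow}(2N)$, and let $A_{ZZ}=\{k\in[N]:k\text{ odd}\}$ be the zigzag partition. Then $A_{ZZ}$ and $\sigma^{\downarrow}$ are posterior-respecting: for every $k\in[N]$ and $y\in\{0,1\}$, $\{\sigma^{\downarrow}(2k-1),\sigma^{\downarrow}(2k)\}\not\subseteq\Pi_{A_{ZZ}}^y$. -/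
open scoped Classical

noncomputable section

/-!
Along the descending enumeration of `Π`, each of the two chains `ε p(k)` and `(1-ε) p(k)` is
decreasing, so the term at position `j` is the `c`-th element of its chain, where `c` counts
the earlier positions of the same chain. Whether `(k, b)` lies in `Π_{A_ZZ}^y` is decided by
the parity of `k + b + y`; at positions `2m` and `2m+1` the counts before them add up to an even
number, and tracking which chain the term at `2m` belongs to shows that the two parities differ.
-/

open Finset

lemma exists_equiv_comp_eq_of_range_eq {α ι κ : Type*} {f : ι → α} {g : κ → α}
    (hf : Function.Injective f) (hg : Function.Injective g) (h : Set.range g = Set.range f) :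
    ∃ e : κ ≃ ι, ∀ j, f (e j) = g j :=
  ⟨(Equiv.ofInjective g hg).trans ((Equiv.setCongr h).trans (Equiv.ofInjective f hf).symm),
    fun _ => Equiv.apply_ofInjective_symm hf _⟩

lemma card_filter_Iio_snd_eq_fst {α κ : Type*} [LinearOrder α] [DecidableEq κ] {M N : ℕ}
    (f : Fin N × κ → α) (hf : ∀ c, StrictAnti fun w => f (w, c))
    (e : Fin M ≃ Fin N × κ) (he : StrictAnti (f ∘ e)) (j : Fin M) :
    #{i ∈ Iio j | (e i).2 = (e j).2} = (e j).1 := by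
  set c := (e j).2
  have hej : e j = ((e j).1, c) := rfl
  calc #{i ∈ Iio j | (e i).2 = c}
      = #(Iio (e j).1) := by
        refine card_nbij' (fun i => (e i).1) (fun w => e.symm (w, c)) ?_ ?_ ?_ ?_
        · intro i hi
          simp only [coe_filter, mem_Iio, Set.mem_ofPred_eq] at hi
          have hei : e i = ((e i).1, c) := Prod.ext rfl hi.2
          have := he hi.1
          simp only [Function.comp_apply] at this
          rw [hei, hej] at this
          simpa using (hf c).lt_iff_gt.mp this
        · intro w hw
          simp only [coe_Iio, Set.mem_Iio] at hw
          simp only [coe_filter, mem_Iio, Set.mem_ofPred_eq, Equiv.apply_symm_apply, and_true]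
          refine he.lt_iff_gt.mp ?_
          simpa [Function.comp_apply, ← hej] using hf c hw
        · intro i hi
          simp only [coe_filter, mem_Iio, Set.mem_ofPred_eq] at hi
          simp [← hi.2]
        · intro w _
          simp
    _ = (e j).1 := Fin.card_Iio _

lemma card_filter_Iio_add_toNat_odd {M : ℕ} (t : Fin M → Bool) (j j' : Fin M)
    (hj : (j : ℕ) % 2 = 0) (hj' : (j' : ℕ) = j + 1) :
    (#{i ∈ Iio j | t i = t j} + (t j).toNat + #{i ∈ Iio j' | t i = t j'} + (t j').toNat) % 2
      = 1 := by
  have hIio : Iio j' = insert j (Iio j) := by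
    ext i
    simp only [mem_Iio, mem_insert, Fin.lt_def, Fin.ext_iff]
    omega
  have hstep : ∀ b, #{i ∈ Iio j' | t i = b} = #{i ∈ Iio j | t i = b} + if t j = b then 1 else 0 := by
    intro b
    rw [hIio, filter_insert]
    split_ifs
    · exact card_insert_of_notMem (by simp)
    · rfl
  have htotal : #{i ∈ Iio j | t i = true} + #{i ∈ Iio j | t i = false} = j := by
    rw [← Fin.card_Iio j, ← card_filter_add_card_filter_not (s := Iio j) (fun i => t i = true)]
    simp
  rw [hstep]
  cases t j <;> cases t j' <;> simp <;> omega

lemma pt_strictAnti {N : ℕ} {p : Fin N → ℝ} {ε : ℝ} (hp : StrictAnti p) (hε0 : 0 < ε)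
    (hε1 : ε < 1) (b : Bool) : StrictAnti fun w => pt N p ε (w, b) := by
  cases b
  · exact hp.const_mul hε0
  · exact hp.const_mul (sub_pos.mpr hε1)

lemma pt_mem_Pi1_iff {N : ℕ} {p : Fin N → ℝ} {ε : ℝ} (hinj : Function.Injective (pt N p ε))
    (A : Finset (Fin N)) (z : Fin N × Bool) :
    pt N p ε z ∈ Pi1 N p ε A ↔ (z.1 ∈ A ↔ z.2 = true) := by
  obtain ⟨w, b⟩ := z
  constructor
  · rintro ⟨k, ⟨hk, h⟩ | ⟨hk, h⟩⟩ <;> cases hinj h <;> simpa using hk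
  · cases b
    · exact fun h => ⟨w, Or.inr ⟨by simpa using h, rfl⟩⟩
    · exact fun h => ⟨w, Or.inl ⟨by simpa using h, rfl⟩⟩

lemma pt_mem_PiY_AZZ_iff {N : ℕ} {p : Fin N → ℝ} {ε : ℝ} (hinj : Function.Injective (pt N p ε))
    (z : Fin N × Bool) (y : Bool) :
    pt N p ε z ∈ PiY N p ε (AZZ N) y ↔ ((z.1 : ℕ) + z.2.toNat + y.toNat) % 2 = 0 := by
  have hAZZ : z.1 ∈ AZZ N ↔ (z.1 : ℕ) % 2 = 0 := by simp [AZZ]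
  cases y
  · rw [PiY, if_neg Bool.false_ne_true, Pi0, Set.mem_sdiff, pt_mem_Pi1_iff hinj, hAZZ]
    simp only [PiAll, Set.mem_range_self, true_and]
    cases z.2 <;> simp; omega
  · rw [PiY, if_pos rfl, pt_mem_Pi1_iff hinj, hAZZ]
    cases z.2 <;> simp <;> omega

theorem stmt7_general (N : ℕ) (p : Fin N → ℝ)
    (hpanti : StrictAnti p)
    (ε : ℝ) (hε0 : 0 < ε) (hε : ε < 1 / 2)
    (hinj : Function.Injective (pt N p ε))
    (σd : Fin (2 * N) → ℝ) (hσd : StrictAnti σd) (hσr : Set.range σd = PiAll N p ε) :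
    PR N p ε σd (AZZ N) := by
  intro k y hsub
  obtain ⟨e, he⟩ := exists_equiv_comp_eq_of_range_eq hinj hσd.injective hσr
  have hchain := pt_strictAnti hpanti hε0 (by linarith)
  have hstrict : StrictAnti (pt N p ε ∘ e) := by
    simpa only [Function.comp_def, he] using hσd
  have hmem : ∀ j, σd j ∈ PiY N p ε (AZZ N) y → ((e j).1 + (e j).2.toNat + y.toNat) % 2 = 0 :=
    fun j hj => (pt_mem_PiY_AZZ_iff hinj (e j) y).mp (by rwa [he])
  have h0 := hmem (i0 k) (hsub (Set.mem_insert _ _))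
  have h1 := hmem (i1 k) (hsub (Set.mem_insert_of_mem _ rfl))
  have hodd := card_filter_Iio_add_toNat_odd (fun i => (e i).2) (i0 k) (i1 k)
    (by simp [i0]) (by simp [i0, i1])
  rw [card_filter_Iio_snd_eq_fst _ hchain e hstrict,
    card_filter_Iio_snd_eq_fst _ hchain e hstrict] at hodd
  omega

/-- **(Statement 7.)** The zigzag partition `A_ZZ` and the descending enumeration
`σ↓` of all posterior terms are posterior-respecting: for every `k` and `y`,
`{σ↓(2k-1), σ↓(2k)} ⊄ Π_{A_ZZ}^y`. -/
theorem stmt7 (N : ℕ) (hN : 1 ≤ N) (p : Fin N → ℝ) (hp : ∀ k, 0 < p k)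
    (hsum : ∑ k, p k = 1) (hpanti : StrictAnti p)
    (ε : ℝ) (hε0 : 0 < ε) (hε : ε < 1 / 2)
    (hinj : Function.Injective (pt N p ε))
    (σd : Fin (2 * N) → ℝ) (hσd : StrictAnti σd) (hσr : Set.range σd = PiAll N p ε) :
    PR N p ε σd (AZZ N) :=
  stmt7_general N p hpanti ε hε0 hε hinj σd hσd hσr

end
end

section
/- For any probability mass function $p$ on $[N]$ with $p(1)\ge\cdots\ge p(N)$, lying probability $0\le\epsilon\le 1/2$, and nondecreasing $f:[N]\to\mathbb{R}$, the zigzag partition minimizes the expected value of $f$ of the guessing time: $G^f_{A_{ZZ}}(X)=\min_{A\subseteq[N]}G^f_A(X)$. -/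
open scoped Classical

noncomputable section

/-- The list of elements of a real multiset sorted in descending order. -/
def sortDesc (m : Multiset ℝ) : List ℝ := (m.sort (· ≤ ·)).reverse

/-- The multiset of posterior terms corresponding to Carole's answer `y` for the
partition `A`: for `y = 1` it consists of `(1-ε)p(k)` for `k ∈ A` and `ε p(k)` for
`k ∉ A`, and complementarily for `y = 0`. -/
def postMul (N : ℕ) (p : Fin N → ℝ) (ε : ℝ) (A : Finset (Fin N)) (y : Bool) :
    Multiset ℝ :=
  Finset.univ.val.map (fun k : Fin N => (if ((k ∈ A) ↔ y = true) then 1 - ε else ε) * p k)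

/-- `G^f_A(X) = ∑_k f(k)·(π_A^0(k) + π_A^1(k))`, where `π_A^y` lists the posterior
multiset `Π_A^y` in descending order. -/
def Gf (N : ℕ) (p : Fin N → ℝ) (ε : ℝ) (f : Fin N → ℝ) (A : Finset (Fin N)) : ℝ :=
  ∑ k : Fin N, f k * ((sortDesc (postMul N p ε A false)).getD k.1 0 +
    (sortDesc (postMul N p ε A true)).getD k.1 0)

/-!
Let `S_A(j)` be the probability that Bob succeeds within his first `j` guesses: the sum of the
`j` largest terms of `Π⁰_A` and of the `j` largest terms of `Π¹_A`. Summation by parts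
gives `G^f_A = f(N) S_A(N) - ∑_j (f(j+1) - f(j)) S_A(j)`, and `S_A(N)` does not depend on `A`,
so it suffices that `S_A(j) ≤ S_{A_ZZ}(j)` for all `j`. Since `Π⁰_A ⊎ Π¹_A` is the multiset
`{(1-ε)p(k)} ⊎ {εp(k)}` for every `A`, `S_A(j)` is at most the sum of its `2j` largest terms,
and the zigzag partition attains this bound.
-/

open Finset

theorem List.Pairwise.sum_le_sum_take {α : Type*} [AddCommMonoid α] [PartialOrder α]
    [IsOrderedAddMonoid α] [DecidableEq α] {l : List α} (hl : l.Pairwise (· ≥ ·))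
    {s : Multiset α} (hs : s ≤ l) : s.sum ≤ (l.take (Multiset.card s)).sum := by
  induction l generalizing s with
  | nil => simp [Multiset.le_zero.mp (by simpa using hs)]
  | cons M l ih =>
    obtain rfl | ⟨x, hx⟩ := s.empty_or_exists_mem
    · simp
    rw [List.pairwise_cons] at hl
    have hsl : s ≤ M ::ₘ (l : Multiset α) := hs
    obtain ⟨y, hy, hyM, hyl⟩ : ∃ y ∈ s, y ≤ M ∧ s.erase y ≤ l := by
      by_cases hM : M ∈ s
      · exact ⟨M, hM, le_rfl, by simpa using Multiset.erase_le_erase M hsl⟩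
      · have hsl' := (Multiset.le_cons_of_notMem hM).mp hsl
        exact ⟨x, hx, hl.1 x (by simpa using Multiset.mem_of_le hsl' hx),
          (Multiset.erase_le x s).trans hsl'⟩
    rw [← Multiset.cons_erase hy, Multiset.sum_cons, Multiset.card_cons, List.take_succ_cons,
      List.sum_cons]
    exact add_le_add hyM (ih hl.2 hyl)

theorem Multiset.map_add_map_eq_of_pair_eq {α β : Type*} {s : Multiset α}
    {f₀ f₁ g₀ g₁ : α → β} (h : ∀ a ∈ s, ({f₀ a, f₁ a} : Multiset β) = {g₀ a, g₁ a}) :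
    s.map f₀ + s.map f₁ = s.map g₀ + s.map g₁ := by
  simp only [← Multiset.bind_singleton, ← Multiset.bind_add, Multiset.singleton_add]
  exact Multiset.bind_congr h

theorem List.sum_range_getD {α : Type*} [AddCommMonoid α] (l : List α) (j : ℕ) :
    ∑ i ∈ Finset.range j, l.getD i 0 = (l.take j).sum := by
  induction j with
  | zero => simp
  | succ n ih =>
    rw [Finset.sum_range_succ, ih]
    rcases lt_or_ge n l.length with h | h
    · rw [List.sum_take_succ l n h, List.getD_eq_getElem l 0 h]
    · rw [List.getD_eq_default l 0 h, List.take_of_length_le h,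
        List.take_of_length_le (h.trans n.le_succ), add_zero]

theorem coe_sortDesc (m : Multiset ℝ) : (sortDesc m : Multiset ℝ) = m := by
  rw [sortDesc, Multiset.coe_reverse, Multiset.sort_eq]

theorem pairwise_sortDesc (m : Multiset ℝ) : (sortDesc m).Pairwise (· ≥ ·) := by
  rw [sortDesc, List.pairwise_reverse]
  exact Multiset.pairwise_sort m (· ≤ ·)

theorem length_sortDesc (m : Multiset ℝ) : (sortDesc m).length = Multiset.card m := by
  rw [← Multiset.coe_card, coe_sortDesc]

theorem sortDesc_eq_of_pairwise {m : Multiset ℝ} {l : List ℝ} (hm : (l : Multiset ℝ) = m)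
    (hl : l.Pairwise (· ≥ ·)) : sortDesc m = l :=
  List.Perm.eq_of_pairwise' (pairwise_sortDesc m) hl
    (Multiset.coe_eq_coe.mp (by rw [coe_sortDesc, hm]))

def topSum (m : Multiset ℝ) (n : ℕ) : ℝ := ((sortDesc m).take n).sum

theorem sum_range_getD_sortDesc (m : Multiset ℝ) (n : ℕ) :
    ∑ i ∈ range n, (sortDesc m).getD i 0 = topSum m n :=
  List.sum_range_getD _ n

theorem topSum_card (m : Multiset ℝ) : topSum m (Multiset.card m) = m.sum := by
  rw [topSum, ← length_sortDesc, List.take_length, ← Multiset.sum_coe, coe_sortDesc]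

theorem sum_le_topSum {s m : Multiset ℝ} (h : s ≤ m) : s.sum ≤ topSum m (Multiset.card s) :=
  (pairwise_sortDesc m).sum_le_sum_take (by rwa [coe_sortDesc])

theorem coe_take_sortDesc_le (m : Multiset ℝ) (n : ℕ) :
    (((sortDesc m).take n : List ℝ) : Multiset ℝ) ≤ m := by
  conv_rhs => rw [← coe_sortDesc m]
  exact Multiset.coe_le.mpr ((sortDesc m).take_sublist n).subperm

theorem card_coe_take_sortDesc {m : Multiset ℝ} {n : ℕ} (hn : n ≤ Multiset.card m) :
    Multiset.card (((sortDesc m).take n : List ℝ) : Multiset ℝ) = n := by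
  rw [Multiset.coe_card, List.length_take, length_sortDesc, min_eq_left hn]

theorem topSum_add_topSum_le {m₀ m₁ : Multiset ℝ} {i j : ℕ} (hi : i ≤ Multiset.card m₀)
    (hj : j ≤ Multiset.card m₁) : topSum m₀ i + topSum m₁ j ≤ topSum (m₀ + m₁) (i + j) := by
  have h := sum_le_topSum (add_le_add (coe_take_sortDesc_le m₀ i) (coe_take_sortDesc_le m₁ j))
  rwa [Multiset.card_add, card_coe_take_sortDesc hi, card_coe_take_sortDesc hj,
    Multiset.sum_add, Multiset.sum_coe, Multiset.sum_coe] at h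

theorem exists_topSum_add_le {m₀ m₁ : Multiset ℝ} {n : ℕ}
    (hn : n ≤ Multiset.card (m₀ + m₁)) :
    ∃ s t, s + t = n ∧ s ≤ Multiset.card m₀ ∧ t ≤ Multiset.card m₁ ∧
      topSum (m₀ + m₁) n ≤ topSum m₀ s + topSum m₁ t := by
  set w : Multiset ℝ := ↑((sortDesc (m₀ + m₁)).take n)
  have hw : w ≤ m₀ + m₁ := coe_take_sortDesc_le _ n
  have hsplit : w ∩ m₀ + (w - m₀) = w := by rw [add_comm, Multiset.sub_add_inter]
  have h₀ : w ∩ m₀ ≤ m₀ := Multiset.inter_le_right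
  have h₁ : w - m₀ ≤ m₁ := Multiset.sub_le_iff_le_add'.mpr hw
  refine ⟨_, _, ?_, Multiset.card_le_card h₀, Multiset.card_le_card h₁, ?_⟩
  · rw [← Multiset.card_add, hsplit, card_coe_take_sortDesc hn]
  · calc topSum (m₀ + m₁) n = (w ∩ m₀).sum + (w - m₀).sum := by
          rw [← Multiset.sum_add, hsplit, Multiset.sum_coe, topSum]
      _ ≤ _ := add_le_add (sum_le_topSum h₀) (sum_le_topSum h₁)

theorem topSum_map_of_antitone {N : ℕ} {g : Fin N → ℝ} (hg : Antitone g) (n : ℕ) :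
    topSum (univ.val.map g) n = ∑ k with k.1 < n, g k := by
  have : sortDesc (univ.val.map g) = List.ofFn g :=
    sortDesc_eq_of_pairwise (Fin.univ_val_map g).symm
      (List.pairwise_ofFn.mpr fun _ _ hij => hg hij.le)
  rw [topSum, this, List.sum_take_ofFn]

theorem sum_range_mul_le_of_sum_range_le {f g h : ℕ → ℝ} {n : ℕ} (hf : MonotoneOn f (Set.Iio n))
    (hpre : ∀ j ≤ n, ∑ i ∈ range j, g i ≤ ∑ i ∈ range j, h i)
    (htot : ∑ i ∈ range n, g i = ∑ i ∈ range n, h i) :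
    ∑ i ∈ range n, f i * h i ≤ ∑ i ∈ range n, f i * g i := by
  have hparts (w : ℕ → ℝ) := sum_range_by_parts f w n
  simp only [smul_eq_mul] at hparts
  rw [hparts, hparts, htot]
  refine sub_le_sub_left (sum_le_sum fun i hi => ?_) _
  have hi : i + 1 < n := by rw [mem_range] at hi; omega
  exact smul_le_smul_of_nonneg_left (hpre _ hi.le)
    (sub_nonneg.mpr (hf (Set.mem_Iio.mpr (by omega)) (Set.mem_Iio.mpr hi) i.le_succ))

theorem Fin.sum_mul_le_of_sum_range_le {n : ℕ} {f : Fin n → ℝ} (hf : Monotone f) {g h : ℕ → ℝ}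
    (hpre : ∀ j ≤ n, ∑ i ∈ range j, g i ≤ ∑ i ∈ range j, h i)
    (htot : ∑ i ∈ range n, g i = ∑ i ∈ range n, h i) :
    ∑ k, f k * h k ≤ ∑ k, f k * g k := by
  let F : ℕ → ℝ := fun i => if hi : i < n then f ⟨i, hi⟩ else 0
  have hF : MonotoneOn F (Set.Iio n) := fun i hi j hj hij => by
    simp only [F, dif_pos (Set.mem_Iio.mp hi), dif_pos (Set.mem_Iio.mp hj)]
    exact hf hij
  have hFf (k : Fin n) : F k = f k := dif_pos k.2
  have key := sum_range_mul_le_of_sum_range_le hF hpre htot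
  rw [← Fin.sum_univ_eq_sum_range (fun i => F i * h i),
    ← Fin.sum_univ_eq_sum_range (fun i => F i * g i)] at key
  simpa only [hFf] using key

theorem card_filter_lt_ite_mod_two (s t n : ℕ) :
    #{i ∈ range n | i < if i % 2 = 0 then s else t} = (min s n + 1) / 2 + min t n / 2 := by
  induction n with
  | zero => simp
  | succ n ih =>
    rw [range_add_one, filter_insert]
    by_cases h : n < if n % 2 = 0 then s else t
    · rw [if_pos h, card_insert_of_notMem (by simp), ih]
      split_ifs at h <;> omega
    · rw [if_neg h, ih]
      split_ifs at h <;> omega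

theorem Fin.card_filter_val {n : ℕ} (P : ℕ → Prop) [DecidablePred P] :
    #{k : Fin n | P k} = #{i ∈ range n | P i} := by
  rw [← card_map valEmbedding, map_filter', map_valEmbedding_univ, ← Nat.Iio_eq_range]
  refine congrArg card (filter_congr fun i hi => ⟨?_, fun h => ⟨⟨i, mem_Iio.mp hi⟩, h, rfl⟩⟩)
  rintro ⟨k, hk, rfl⟩
  exact hk

theorem sum_le_topSum_map {ι : Type*} [Fintype ι] (c : ι → ℝ) (T : Finset ι) :
    ∑ k ∈ T, c k ≤ topSum (univ.val.map c) #T := by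
  have h := sum_le_topSum (Multiset.map_le_map (f := c) (val_le_iff.mpr (subset_univ T)))
  rwa [Multiset.card_map, card_val, ← sum_eq_multiset_sum] at h

/-- The `2j` largest values of `a` and `b` are the first `s` values of `a` and the first `t`
values of `b`, for some `s + t = 2j`. The zigzag split sends them alternately to the two sides,
and as `s` and `t` have the same parity, each side receives exactly `j` of them. -/
theorem topSum_add_le_topSum_zigzag {N : ℕ} {a b : Fin N → ℝ} (ha : Antitone a)
    (hb : Antitone b) {j : ℕ} (hj : j ≤ N) :
    topSum (univ.val.map a + univ.val.map b) (2 * j) ≤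
      topSum (univ.val.map fun k => if k.1 % 2 = 0 then b k else a k) j +
        topSum (univ.val.map fun k => if k.1 % 2 = 0 then a k else b k) j := by
  obtain ⟨s, t, hst, hs, ht, hle⟩ :=
    exists_topSum_add_le (m₀ := univ.val.map a) (m₁ := univ.val.map b) (n := 2 * j)
      (by simp only [Multiset.card_add, Multiset.card_map, card_val, card_univ,
        Fintype.card_fin]; omega)
  simp only [Multiset.card_map, card_val, card_univ, Fintype.card_fin] at hs ht
  rw [topSum_map_of_antitone ha, topSum_map_of_antitone hb] at hle
  have hsplit : ∑ k with k.1 < s, a k + ∑ k with k.1 < t, b k =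
      ∑ k with k.1 < (if k.1 % 2 = 0 then t else s), (if k.1 % 2 = 0 then b k else a k) +
        ∑ k with k.1 < (if k.1 % 2 = 0 then s else t), (if k.1 % 2 = 0 then a k else b k) := by
    simp only [sum_filter, ← sum_add_distrib]
    refine sum_congr rfl fun k _ => ?_
    split_ifs <;> simp_all [add_comm]
  have hcard (u v : ℕ) (hu : u ≤ N) (hv : v ≤ N) (huv : u + v = 2 * j) :
      #{k : Fin N | k.1 < if k.1 % 2 = 0 then u else v} = j := by
    rw [Fin.card_filter_val (fun i => i < if i % 2 = 0 then u else v),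
      card_filter_lt_ite_mod_two]
    omega
  calc _ ≤ _ := hle
    _ = _ := hsplit
    _ ≤ _ := by
      gcongr
      · exact (sum_le_topSum_map _ _).trans_eq (congrArg _ (hcard t s ht hs (by omega)))
      · exact (sum_le_topSum_map _ _).trans_eq (congrArg _ (hcard s t hs ht hst))

section Posterior

variable {N : ℕ} {p : Fin N → ℝ} {ε : ℝ}

theorem card_postMul (A : Finset (Fin N)) (y : Bool) :
    Multiset.card (postMul N p ε A y) = N := by
  simp [postMul]

theorem postMul_false_add_postMul_true (A : Finset (Fin N)) :
    postMul N p ε A false + postMul N p ε A true =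
      univ.val.map (fun k => (1 - ε) * p k) + univ.val.map (fun k => ε * p k) := by
  refine Multiset.map_add_map_eq_of_pair_eq fun k _ => ?_
  by_cases hk : k ∈ A
  · simpa [hk] using Multiset.pair_comm _ _
  · simp [hk]

theorem postMul_AZZ (y : Bool) :
    postMul N p ε (AZZ N) y = univ.val.map fun k =>
      if k.1 % 2 = 0 then (if y then 1 - ε else ε) * p k else (if y then ε else 1 - ε) * p k := by
  refine Multiset.map_congr rfl fun k _ => ?_
  cases y <;> by_cases hk : k.1 % 2 = 0 <;> simp [AZZ, hk]

/-- The probability that Bob's guess number `i + 1` is correct. -/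
def guessMass (N : ℕ) (p : Fin N → ℝ) (ε : ℝ) (A : Finset (Fin N)) (i : ℕ) : ℝ :=
  (sortDesc (postMul N p ε A false)).getD i 0 + (sortDesc (postMul N p ε A true)).getD i 0

theorem sum_range_guessMass (A : Finset (Fin N)) (j : ℕ) :
    ∑ i ∈ range j, guessMass N p ε A i =
      topSum (postMul N p ε A false) j + topSum (postMul N p ε A true) j := by
  simp only [guessMass, sum_add_distrib, sum_range_getD_sortDesc]

theorem sum_range_guessMass_eq (A B : Finset (Fin N)) :
    ∑ i ∈ range N, guessMass N p ε A i = ∑ i ∈ range N, guessMass N p ε B i := by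
  have htotal (C : Finset (Fin N)) : ∑ i ∈ range N, guessMass N p ε C i =
      (postMul N p ε C false + postMul N p ε C true).sum := by
    rw [sum_range_guessMass, Multiset.sum_add, ← topSum_card, ← topSum_card, card_postMul,
      card_postMul]
  rw [htotal, htotal, postMul_false_add_postMul_true, postMul_false_add_postMul_true]

theorem sum_range_guessMass_le_AZZ (hε₀ : 0 ≤ ε) (hε₁ : ε ≤ 1) (hp : Antitone p)
    (A : Finset (Fin N)) {j : ℕ} (hj : j ≤ N) :
    ∑ i ∈ range j, guessMass N p ε A i ≤ ∑ i ∈ range j, guessMass N p ε (AZZ N) i := by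
  have ha : Antitone fun k => (1 - ε) * p k :=
    fun _ _ h => mul_le_mul_of_nonneg_left (hp h) (sub_nonneg.mpr hε₁)
  have hb : Antitone fun k => ε * p k := fun _ _ h => mul_le_mul_of_nonneg_left (hp h) hε₀
  simp only [sum_range_guessMass]
  calc _ ≤ topSum (postMul N p ε A false + postMul N p ε A true) (j + j) :=
        topSum_add_topSum_le (by rwa [card_postMul]) (by rwa [card_postMul])
    _ ≤ _ := by
      rw [postMul_false_add_postMul_true, ← two_mul, postMul_AZZ, postMul_AZZ]
      simpa using topSum_add_le_topSum_zigzag ha hb hj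

end Posterior

theorem stmt10_general (N : ℕ) (p : Fin N → ℝ) (hord : Antitone p)
    (ε : ℝ) (hε0 : 0 ≤ ε) (hε : ε ≤ 1 / 2)
    (f : Fin N → ℝ) (hf : Monotone f) :
    IsLeast (Set.range fun A : Finset (Fin N) => Gf N p ε f A)
      (Gf N p ε f (AZZ N)) := by
  refine ⟨⟨AZZ N, rfl⟩, ?_⟩
  rintro _ ⟨A, rfl⟩
  exact Fin.sum_mul_le_of_sum_range_le hf
    (fun _ hj => sum_range_guessMass_le_AZZ hε0 (by linarith) hord A hj)
    (sum_range_guessMass_eq A (AZZ N))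

/-- **(Statement 10, main theorem.)** For any pmf `p` on `[N]` with
`p(1) ≥ ⋯ ≥ p(N)`, any lying probability `0 ≤ ε ≤ 1/2`, and any nondecreasing `f`,
the zigzag partition attains the minimum of `G^f_A(X)` over all partitions `A`. -/
theorem stmt10 (N : ℕ) (hN : 1 ≤ N) (p : Fin N → ℝ) (hp : ∀ k, 0 ≤ p k)
    (hsum : ∑ k, p k = 1) (hord : Antitone p)
    (ε : ℝ) (hε0 : 0 ≤ ε) (hε : ε ≤ 1 / 2)
    (f : Fin N → ℝ) (hf : Monotone f) :
    IsLeast (Set.range fun A : Finset (Fin N) => Gf N p ε f A)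
      (Gf N p ε f (AZZ N)) :=
  stmt10_general N p hord ε hε0 hε f hf

end
end

section
/- If $\epsilon<1/2$ is close enough to $1/2$ so that $\epsilon p(k)\ge\bar\epsilon p(k+1)$ for all $k\in[N-1]$, then the graph $\mathcal{G}_{\sigma^{\downarrow}}$ consists of exactly $N$ isolated edges (each posterior-sibling pair $\{\epsilon p(k),\bar\epsilon p(k)\}$ is also a $\sigma^{\downarrow}$-sibling pair), and hence there are $2^N$ optimal partitions. -/
/-!
When `ε p(k) ≥ (1-ε) p(k+1)` and the posterior terms are distinct, the intervals
`[ε p(k), (1-ε) p(k)]` are disjoint and strictly decreasing in `k`. Hence listing the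
posterior terms in descending order lists them pair by pair, so the `σ↓`-sibling pairs are
exactly the posterior-sibling pairs. For the same reason, whatever the partition `A`, the
`k`-th largest elements of `Π_A^0` and `Π_A^1` are the two terms `ε p(k)` and `(1-ε) p(k)`,
which add up to `p(k)`; so `G^f_A = ∑ f(k) p(k)` does not depend on `A` and all `2^N`
partitions are optimal.
-/

open scoped Classical

noncomputable section

/-- The candidate for `σ↓`: position `2k` holds `(1-ε) p(k)` and position `2k+1` holds `ε p(k)`. -/
def descEnum (N : ℕ) (p : Fin N → ℝ) (ε : ℝ) (i : Fin (2 * N)) : ℝ :=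
  pt N p ε (⟨i.1 / 2, by omega⟩, decide (i.1 % 2 = 0))

/-- The intervals `[ε p(k), (1-ε) p(k)]` holding the posterior-sibling pairs are pairwise
disjoint and listed in decreasing order. -/
def PairsSeparated (N : ℕ) (p : Fin N → ℝ) (ε : ℝ) : Prop :=
  ∀ i j : Fin N, i < j → (1 - ε) * p j < ε * p i

lemma sortDesc_map_of_antitone {N : ℕ} {q : Fin N → ℝ} (hq : Antitone q) :
    sortDesc (Finset.univ.val.map q) = List.ofFn q := by
  rw [sortDesc, List.reverse_eq_iff]
  refine List.Perm.eq_of_pairwise' (r := (· ≤ ·)) (Multiset.pairwise_sort _ _) ?_ ?_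
  · rw [List.pairwise_reverse, List.pairwise_ofFn]
    exact fun _ _ h => hq h.le
  · rw [← Multiset.coe_eq_coe, Multiset.sort_eq, Multiset.coe_reverse, Fin.univ_val_map]

section Posterior

variable {N : ℕ} {p : Fin N → ℝ} {ε : ℝ}

lemma pt_add_pt_not (k : Fin N) (b : Bool) : pt N p ε (k, b) + pt N p ε (k, !b) = p k := by
  cases b <;> simp only [pt, Bool.not_false, Bool.not_true, Bool.false_eq_true, ↓reduceIte] <;>
    ring

lemma mul_le_pt {k : Fin N} (hk : 0 ≤ p k) (hε : ε ≤ 1 / 2) (b : Bool) :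
    ε * p k ≤ pt N p ε (k, b) := by
  cases b <;> simp only [pt, Bool.false_eq_true, ↓reduceIte] <;> nlinarith

lemma pt_le_mul {k : Fin N} (hk : 0 ≤ p k) (hε : ε ≤ 1 / 2) (b : Bool) :
    pt N p ε (k, b) ≤ (1 - ε) * p k := by
  cases b <;> simp only [pt, Bool.false_eq_true, ↓reduceIte] <;> nlinarith

lemma pt_false_lt_pt_true {k : Fin N} (hk : 0 < p k) (hε : ε < 1 / 2) :
    pt N p ε (k, false) < pt N p ε (k, true) := by
  simp only [pt, Bool.false_eq_true, ↓reduceIte]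
  nlinarith

/-- Injectivity of `pt` makes the closeness condition between consecutive pairs strict. -/
lemma pairsSeparated_of_close (hpanti : Antitone p) (hε : ε ≤ 1)
    (hinj : Function.Injective (pt N p ε))
    (hclose : ∀ k j : Fin N, j.1 = k.1 + 1 → (1 - ε) * p j ≤ ε * p k) :
    PairsSeparated N p ε := by
  intro i j hij
  have hsucc : i.1 + 1 < N := by omega
  set m : Fin N := ⟨i.1 + 1, hsucc⟩
  have hne : (1 - ε) * p m ≠ ε * p i := fun h =>
    absurd (congrArg (fun x : Fin N × Bool => x.1.1)
      (hinj (a₁ := (m, true)) (a₂ := (i, false)) h)) (by simp [m])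
  calc (1 - ε) * p j ≤ (1 - ε) * p m :=
        mul_le_mul_of_nonneg_left (hpanti (Fin.mk_le_of_le_val (by omega))) (by linarith)
    _ < ε * p i := (hclose i m rfl).lt_of_ne hne

lemma descEnum_i0 (k : Fin N) : descEnum N p ε (i0 k) = pt N p ε (k, true) := by
  simp [descEnum, i0]

lemma descEnum_i1 (k : Fin N) : descEnum N p ε (i1 k) = pt N p ε (k, false) := by
  simp [descEnum, i1, Nat.mul_add_div]

lemma range_descEnum : Set.range (descEnum N p ε) = PiAll N p ε := by
  refine (Set.range_subset_iff.2 fun _ => Set.mem_range_self (f := pt N p ε) _).antisymm ?_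
  rintro _ ⟨⟨k, _ | _⟩, rfl⟩
  · exact ⟨i1 k, descEnum_i1 k⟩
  · exact ⟨i0 k, descEnum_i0 k⟩

namespace PairsSeparated

lemma pt_lt_pt (hsep : PairsSeparated N p ε) (hp : ∀ k, 0 ≤ p k) (hε : ε ≤ 1 / 2)
    {i j : Fin N} (hij : i < j) (b b' : Bool) : pt N p ε (j, b) < pt N p ε (i, b') :=
  calc pt N p ε (j, b) ≤ (1 - ε) * p j := pt_le_mul (hp j) hε b
    _ < ε * p i := hsep i j hij
    _ ≤ pt N p ε (i, b') := mul_le_pt (hp i) hε b'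

lemma strictAnti_descEnum (hsep : PairsSeparated N p ε) (hp : ∀ k, 0 < p k)
    (hε : ε < 1 / 2) :
    StrictAnti (descEnum N p ε) := by
  intro i j hij
  have hij : i.1 < j.1 := hij
  rcases Nat.lt_or_ge (i.1 / 2) (j.1 / 2) with hpair | hpair
  · exact hsep.pt_lt_pt (fun k => (hp k).le) hε.le hpair _ _
  · obtain ⟨k, rfl, rfl⟩ : ∃ k : Fin N, i = i0 k ∧ j = i1 k :=
      ⟨⟨i.1 / 2, by omega⟩, Fin.ext (by simp only [i0]; omega),
        Fin.ext (by simp only [i1]; omega)⟩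
    rw [descEnum_i0, descEnum_i1]
    exact pt_false_lt_pt_true (hp k) hε

lemma Gf_eq_sum (hsep : PairsSeparated N p ε) (hp : ∀ k, 0 ≤ p k) (hε : ε ≤ 1 / 2)
    (f : Fin N → ℝ) (A : Finset (Fin N)) :
    Gf N p ε f A = ∑ k, f k * p k := by
  have hpost : ∀ y : Bool, postMul N p ε A y =
      Finset.univ.val.map fun k => pt N p ε (k, decide ((k ∈ A) ↔ y = true)) := by
    intro y
    simp only [postMul, pt, decide_eq_true_eq]
  have hanti : ∀ y : Bool, Antitone fun k => pt N p ε (k, decide ((k ∈ A) ↔ y = true)) :=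
    fun y => StrictAnti.antitone fun i j hij => hsep.pt_lt_pt hp hε hij _ _
  refine Finset.sum_congr rfl fun k _ => ?_
  rw [hpost, hpost, sortDesc_map_of_antitone (hanti false), sortDesc_map_of_antitone (hanti true),
    ← pt_add_pt_not (p := p) (ε := ε) k (decide ((k ∈ A) ↔ false = true))]
  by_cases hk : k ∈ A <;> simp [hk]

end PairsSeparated

end Posterior

theorem stmt13_general (N : ℕ) (p : Fin N → ℝ) (hp : ∀ k, 0 < p k)
    (hpanti : StrictAnti p)
    (ε : ℝ) (hε : ε < 1 / 2)
    (hinj : Function.Injective (pt N p ε))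
    (σd : Fin (2 * N) → ℝ) (hσd : StrictAnti σd) (hσr : Set.range σd = PiAll N p ε)
    (hclose : ∀ k j : Fin N, j.1 = k.1 + 1 → (1 - ε) * p j ≤ ε * p k)
    (f : Fin N → ℝ) :
    (∀ k : Fin N, ∃ j : Fin N,
        ({σd (i0 j), σd (i1 j)} : Set ℝ) = {pt N p ε (k, false), pt N p ε (k, true)}) ∧
      Nat.card {A : Finset (Fin N) //
          ∀ B : Finset (Fin N), Gf N p ε f A ≤ Gf N p ε f B} = 2 ^ N := by
  have hsep := pairsSeparated_of_close hpanti.antitone (by linarith) hinj hclose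
  have hσ : σd = descEnum N p ε :=
    Set.range_injOn_strictAnti hσd (hsep.strictAnti_descEnum hp hε)
      (hσr.trans range_descEnum.symm)
  refine ⟨fun k => ⟨k, by rw [hσ, descEnum_i0, descEnum_i1, Set.pair_comm]⟩, ?_⟩
  have hGf := hsep.Gf_eq_sum (fun k => (hp k).le) hε.le f
  have hall : ∀ A B : Finset (Fin N), Gf N p ε f A ≤ Gf N p ε f B :=
    fun A B => ((hGf A).trans (hGf B).symm).le
  rw [Nat.card_congr (Equiv.subtypeUnivEquiv hall), Nat.card_eq_fintype_card,
    Fintype.card_finset, Fintype.card_fin]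

/-- **(Statement 13.)** If `ε < 1/2` is close enough to `1/2` that
`ε p(k) ≥ (1-ε) p(k+1)` for all `k`, then every posterior-sibling pair
`{ε p(k), (1-ε) p(k)}` is also a σ↓-sibling pair (so `𝒢_{σ↓}` consists of exactly
`N` isolated edges), and hence all `2^N` partitions are optimal:
the number of partitions minimizing `G^f_A(X)` is `2 ^ N`. -/
theorem stmt13 (N : ℕ) (hN : 1 ≤ N) (p : Fin N → ℝ) (hp : ∀ k, 0 < p k)
    (hsum : ∑ k, p k = 1) (hpanti : StrictAnti p)
    (ε : ℝ) (hε0 : 0 < ε) (hε : ε < 1 / 2)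
    (hinj : Function.Injective (pt N p ε))
    (σd : Fin (2 * N) → ℝ) (hσd : StrictAnti σd) (hσr : Set.range σd = PiAll N p ε)
    (hclose : ∀ k j : Fin N, j.1 = k.1 + 1 → (1 - ε) * p j ≤ ε * p k)
    (f : Fin N → ℝ) (hf : Monotone f) :
    (∀ k : Fin N, ∃ j : Fin N,
        ({σd (i0 j), σd (i1 j)} : Set ℝ) = {pt N p ε (k, false), pt N p ε (k, true)}) ∧
      Nat.card {A : Finset (Fin N) //
          ∀ B : Finset (Fin N), Gf N p ε f A ≤ Gf N p ε f B} = 2 ^ N :=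
  stmt13_general N p hp hpanti ε hε hinj σd hσd hσr hclose f

end
end

section
/- Suppose the distribution $p$ and noise level $\epsilon$ satisfy $\max_{k\in[N-2]} p(k+2)/p(k) < \epsilon/\bar\epsilon < \min_{k\in[N-1]} p(k+1)/p(k)$. Then the graph $\mathcal{G}_{\sigma^{\downarrow}}$ is a single cycle on $2N$ vertices, and consequently the zigzag partition is the unique optimal partition up to complementation. -/
open scoped Classical

noncomputable section

/-!
Under the ratio condition the posterior terms, in decreasing order, are
`(1-ε)p(0), (1-ε)p(1), εp(0), (1-ε)p(2), εp(1), …, (1-ε)p(N-1), εp(N-2), εp(N-1)`,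
so `σ↓` is explicit. Its sibling pairs `{σ↓(2k), σ↓(2k+1)}` are `{(1-ε)p(0), (1-ε)p(1)}`,
`{εp(k-1), (1-ε)p(k+1)}` and `{εp(N-2), εp(N-1)}`; with the posterior-sibling edges
`{(1-ε)p(k), εp(k)}` every vertex gets exactly two neighbours, and every vertex other than
`(1-ε)p(0)` has a neighbour that comes earlier in the order, so the graph is connected.

A partition `A` is posterior-respecting exactly when `v ↦ y` with `pt v ∈ Π_A^y` is a proper
2-colouring of `𝒢_{σ↓}` (posterior siblings always lie in different posterior sets). A proper
2-colouring of a connected graph is determined by its colour at one vertex, and the zigzag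
partition and its complement realise both choices.
-/
open Function

theorem Fin.strictAnti_of_forall_val_eq_add_one {α : Type*} [Preorder α] {m : ℕ}
    {f : Fin m → α} (h : ∀ i j : Fin m, (j : ℕ) = i + 1 → f j < f i) : StrictAnti f := by
  cases m with
  | zero => exact fun i => i.elim0
  | succ n => exact Fin.strictAnti_iff_succ_lt.mpr fun i => h _ _ (by simp)

theorem SimpleGraph.reachable_of_forall_exists_adj_lt {V : Type*} (G : SimpleGraph V)
    (f : V → ℕ) {v₀ : V} (h : ∀ v, v ≠ v₀ → ∃ w, G.Adj v w ∧ f w < f v) (v : V) :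
    G.Reachable v₀ v := by
  induction hn : f v using Nat.strong_induction_on generalizing v with
  | _ n ih =>
    by_cases hv : v = v₀
    · exact hv ▸ SimpleGraph.Reachable.refl v
    · obtain ⟨w, hvw, hw⟩ := h v hv
      exact (ih (f w) (hn ▸ hw) w rfl).trans hvw.symm.reachable

theorem SimpleGraph.Coloring.eq_of_connected_of_apply_eq {V : Type*} {G : SimpleGraph V}
    (hG : G.Connected) {C D : G.Coloring Bool} {v : V} (hv : C v = D v) : C = D := by
  ext w
  obtain ⟨q⟩ := hG.preconnected v w
  induction q with
  | nil => exact hv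
  | cons hadj _ ih =>
    apply ih
    rw [Bool.eq_not_iff.mpr (C.valid hadj).symm, Bool.eq_not_iff.mpr (D.valid hadj).symm, hv]

section Zigzag

variable {N : ℕ} {p : Fin N → ℝ} {ε : ℝ} {σ : Fin (2 * N) → ℝ}

/-- The position of `pt v` in the decreasing order of the posterior terms; the truncated
`2 * 0 - 1 = 0` puts `(1-ε)p(0)` first. -/
def descRank (N : ℕ) (v : Fin N × Bool) : Fin (2 * N) :=
  ⟨if v.2 then 2 * v.1 - 1 else min (2 * v.1 + 2) (2 * N - 1), by
    have := v.1.isLt; split <;> omega⟩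

@[simp]
theorem descRank_true (k : Fin N) : (descRank N (k, true) : ℕ) = 2 * (k : ℕ) - 1 := rfl

@[simp]
theorem descRank_false (k : Fin N) :
    (descRank N (k, false) : ℕ) = min (2 * (k : ℕ) + 2) (2 * N - 1) := rfl

theorem descRank_injective : Injective (descRank N) := by
  rintro ⟨a, _ | _⟩ ⟨c, _ | _⟩ h <;> have := a.isLt <;> have := c.isLt <;>
    simp only [Fin.ext_iff, descRank_true, descRank_false, Prod.mk.injEq, and_true,
      Bool.false_eq_true, Bool.true_eq_false, and_false] at h ⊢ <;> omega

def descEquiv (N : ℕ) : Fin N × Bool ≃ Fin (2 * N) :=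
  Equiv.ofBijective (descRank N)
    ((Fintype.bijective_iff_injective_and_card _).mpr ⟨descRank_injective, by simp [mul_comm]⟩)

@[simp]
theorem descEquiv_apply (v : Fin N × Bool) : descEquiv N v = descRank N v := rfl

@[simp]
theorem descRank_descEquiv_symm (i : Fin (2 * N)) : descRank N ((descEquiv N).symm i) = i :=
  (descEquiv N).apply_symm_apply i

@[simp]
theorem pt_true (k : Fin N) : pt N p ε (k, true) = (1 - ε) * p k := rfl

@[simp]
theorem pt_false (k : Fin N) : pt N p ε (k, false) = ε * p k := rfl

theorem strictAnti_pt_comp_descEquiv_symm (hN : 2 ≤ N)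
    (hp : StrictAnti p) (hε0 : 0 < ε) (hε1 : ε < 1)
    (hT : ∀ i j : Fin N, j.1 = i.1 + 2 → (1 - ε) * p j < ε * p i)
    (hF : ∀ i j : Fin N, j.1 = i.1 + 1 → ε * p i < (1 - ε) * p j) :
    StrictAnti (pt N p ε ∘ (descEquiv N).symm) := by
  refine Fin.strictAnti_of_forall_val_eq_add_one fun i j hij => ?_
  rw [← descRank_descEquiv_symm i, ← descRank_descEquiv_symm j] at hij
  simp only [comp_apply]
  generalize (descEquiv N).symm i = u, (descEquiv N).symm j = v at hij ⊢
  obtain ⟨a, _ | _⟩ := u <;> obtain ⟨c, _ | _⟩ := v <;>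
    simp only [descRank_true, descRank_false, pt_true, pt_false] at hij ⊢ <;>
    have := a.isLt <;> have := c.isLt
  · exact mul_lt_mul_of_pos_left (hp (Fin.lt_def.mpr (by omega))) hε0
  · exact hT a c (by omega)
  · exact hF c a (by omega)
  · exact mul_lt_mul_of_pos_left (hp (Fin.lt_def.mpr (by omega))) (by linarith)

theorem apply_descRank_eq_pt (hσ : StrictAnti σ) (hrange : Set.range σ = PiAll N p ε)
    (hpt : StrictAnti (pt N p ε ∘ (descEquiv N).symm)) (v : Fin N × Bool) :
    σ (descRank N v) = pt N p ε v := by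
  have hσpt : σ = pt N p ε ∘ (descEquiv N).symm := by
    rw [← hσ.range_inj hpt, hrange, PiAll, Set.range_comp, Equiv.range_eq_univ, Set.image_univ]
  simp [hσpt, ← descEquiv_apply]

theorem exists_pair_eq_i0_i1_iff (a b : Fin (2 * N)) :
    (∃ k : Fin N, ({a, b} : Set (Fin (2 * N))) = {i0 k, i1 k}) ↔
      a ≠ b ∧ (a : ℕ) / 2 = b / 2 := by
  simp only [Set.pair_eq_pair_iff, Fin.ext_iff, i0, i1, ne_eq]
  constructor
  · rintro ⟨k, ⟨h₁, h₂⟩ | ⟨h₁, h₂⟩⟩ <;> omega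
  · rintro ⟨hne, h⟩
    exact ⟨⟨a / 2, by omega⟩, by dsimp only; omega⟩

theorem gsig_adj_iff (hσ : Injective σ) (hσpt : ∀ v, σ (descRank N v) = pt N p ε v)
    {u v : Fin N × Bool} :
    (Gsig N p ε σ).Adj u v ↔
      u ≠ v ∧ (u.1 = v.1 ∨ (descRank N u : ℕ) / 2 = descRank N v / 2) := by
  have hsib : ∀ a b,
      (∃ k : Fin N, ({pt N p ε a, pt N p ε b} : Set ℝ) = {σ (i0 k), σ (i1 k)}) ↔
      a ≠ b ∧ (descRank N a : ℕ) / 2 = descRank N b / 2 := fun a b => by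
    simp only [← hσpt, ← Set.image_pair, (Set.image_injective.mpr hσ).eq_iff]
    rw [Set.image_pair, exists_pair_eq_i0_i1_iff, descRank_injective.ne_iff]
  simp only [Gsig, SimpleGraph.fromRel_adj, hsib]
  grind

/-- The other position in the σ-sibling pair `{2k, 2k + 1}` containing `i`. -/
def siblingPos (i : Fin (2 * N)) : Fin (2 * N) := ⟨2 * (i / 2) + (1 - i % 2), by omega⟩

theorem gsig_neighborSet (hN : 2 ≤ N) (hσ : Injective σ)
    (hσpt : ∀ v, σ (descRank N v) = pt N p ε v) (v : Fin N × Bool) :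
    (Gsig N p ε σ).neighborSet v =
      {(v.1, !v.2), (descEquiv N).symm (siblingPos (descRank N v))} := by
  ext w
  rw [SimpleGraph.mem_neighborSet, gsig_adj_iff hσ hσpt, Set.mem_insert_iff,
    Set.mem_singleton_iff, Equiv.eq_symm_apply, descEquiv_apply, ← descRank_injective.ne_iff]
  obtain ⟨a, _ | _⟩ := v <;> obtain ⟨c, _ | _⟩ := w <;>
    have := a.isLt <;> have := c.isLt <;>
    simp only [siblingPos, descRank_true, descRank_false, Fin.ext_iff, Prod.mk.injEq,
      Bool.not_true, Bool.not_false, and_true, Bool.false_eq_true, Bool.true_eq_false,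
      and_false, false_or, ne_eq] <;> omega

theorem ncard_neighborSet_gsig (hN : 2 ≤ N) (hσ : Injective σ)
    (hσpt : ∀ v, σ (descRank N v) = pt N p ε v) (v : Fin N × Bool) :
    ((Gsig N p ε σ).neighborSet v).ncard = 2 := by
  rw [gsig_neighborSet hN hσ hσpt, Set.ncard_pair]
  rw [ne_eq, Equiv.eq_symm_apply, descEquiv_apply, Fin.ext_iff]
  obtain ⟨a, _ | _⟩ := v <;> have := a.isLt <;>
    simp only [siblingPos, descRank_true, descRank_false, Bool.not_true, Bool.not_false] <;> omega

theorem gsig_connected (hN : 2 ≤ N) (hσ : Injective σ)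
    (hσpt : ∀ v, σ (descRank N v) = pt N p ε v) : (Gsig N p ε σ).Connected := by
  refine (SimpleGraph.connected_iff_exists_forall_reachable _).mpr ⟨(⟨0, by omega⟩, true),
    SimpleGraph.reachable_of_forall_exists_adj_lt _ (fun v => descRank N v) ?_⟩
  rintro ⟨k, _ | _⟩ hk <;> have := k.isLt
  · refine ⟨(k, true), (gsig_adj_iff hσ hσpt).mpr ⟨by simp, Or.inl rfl⟩, ?_⟩
    simp only [descRank_true, descRank_false]
    omega
  · have hk0 : (k : ℕ) ≠ 0 := fun h => hk (by simp [Fin.ext_iff, h])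
    refine ⟨(descEquiv N).symm ⟨2 * k - 2, by omega⟩,
      (gsig_adj_iff hσ hσpt).mpr ⟨?_, Or.inr ?_⟩, ?_⟩
    · rw [ne_eq, Equiv.eq_symm_apply, descEquiv_apply, Fin.ext_iff, descRank_true]
      dsimp only
      omega
    · simp only [descRank_descEquiv_symm, descRank_true]
      omega
    · simp only [descRank_descEquiv_symm, descRank_true]
      omega

def posteriorAnswer (A : Finset (Fin N)) (v : Fin N × Bool) : Bool :=
  decide (v.1 ∈ A ↔ v.2 = true)

theorem pt_mem_piY_iff (hinj : Injective (pt N p ε)) (A : Finset (Fin N))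
    (v : Fin N × Bool) (y : Bool) :
    pt N p ε v ∈ PiY N p ε A y ↔ posteriorAnswer A v = y := by
  have h₁ : pt N p ε v ∈ Pi1 N p ε A ↔ (v.1 ∈ A ↔ v.2 = true) := by
    simp only [Pi1, Set.mem_ofPred_eq, hinj.eq_iff]
    obtain ⟨a, _ | _⟩ := v <;> simp
  cases y <;>
    simp only [PiY, Pi0, PiAll, Set.mem_sdiff, Set.mem_range_self, true_and, h₁, ite_true,
      Bool.false_eq_true, ite_false, posteriorAnswer, decide_eq_true_eq, decide_eq_false_iff_not]

theorem posteriorAnswer_compl (A : Finset (Fin N)) (v : Fin N × Bool) :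
    posteriorAnswer Aᶜ v = !posteriorAnswer A v := by
  obtain ⟨a, _ | _⟩ := v <;> simp [posteriorAnswer]

theorem pr_iff_forall_adj (hσ : Injective σ) (hσpt : ∀ v, σ (descRank N v) = pt N p ε v)
    (A : Finset (Fin N)) :
    PR N p ε σ A ↔
      ∀ u v, (Gsig N p ε σ).Adj u v → posteriorAnswer A u ≠ posteriorAnswer A v := by
  have hinj : Injective (pt N p ε) := by
    have : pt N p ε = σ ∘ descRank N := funext fun v => (hσpt v).symm
    exact this ▸ hσ.comp descRank_injective
  have hpos : ∀ i, σ i = pt N p ε ((descEquiv N).symm i) := fun i => by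
    rw [← hσpt, descRank_descEquiv_symm]
  have hPR : PR N p ε σ A ↔ ∀ k : Fin N, posteriorAnswer A ((descEquiv N).symm (i0 k)) ≠
      posteriorAnswer A ((descEquiv N).symm (i1 k)) := by
    simp only [PR, Set.insert_subset_iff, Set.singleton_subset_iff, hpos, pt_mem_piY_iff hinj]
    grind
  rw [hPR]
  constructor
  · intro h u v huv
    obtain ⟨hne, hfst | hhalf⟩ := (gsig_adj_iff hσ hσpt).mp huv
    · obtain ⟨a, _ | _⟩ := u <;> obtain ⟨c, _ | _⟩ := v <;> simp_all [posteriorAnswer]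
    · rw [← descRank_injective.ne_iff, ne_eq, Fin.ext_iff] at hne
      have hlt := (descRank N u).isLt
      let k : Fin N := ⟨descRank N u / 2, by omega⟩
      rcases Nat.mod_two_eq_zero_or_one (descRank N u) with h0 | h1
      · have hu : u = (descEquiv N).symm (i0 k) := by
          rw [Equiv.eq_symm_apply, descEquiv_apply, Fin.ext_iff]; simp only [i0, k]; omega
        have hv : v = (descEquiv N).symm (i1 k) := by
          rw [Equiv.eq_symm_apply, descEquiv_apply, Fin.ext_iff]; simp only [i1, k]; omega
        exact hu ▸ hv ▸ h k
      · have hu : u = (descEquiv N).symm (i1 k) := by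
          rw [Equiv.eq_symm_apply, descEquiv_apply, Fin.ext_iff]; simp only [i1, k]; omega
        have hv : v = (descEquiv N).symm (i0 k) := by
          rw [Equiv.eq_symm_apply, descEquiv_apply, Fin.ext_iff]; simp only [i0, k]; omega
        exact hu ▸ hv ▸ (h k).symm
  · intro h k
    refine h _ _ ((gsig_adj_iff hσ hσpt).mpr ⟨(descEquiv N).symm.injective.ne ?_, Or.inr ?_⟩)
    · simp [Fin.ext_iff, i0, i1]
    · simp only [descRank_descEquiv_symm, i0, i1]
      omega

theorem eq_of_forall_adj_posteriorAnswer_ne {G : SimpleGraph (Fin N × Bool)} (hG : G.Connected)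
    {A B : Finset (Fin N)} (hA : ∀ u v, G.Adj u v → posteriorAnswer A u ≠ posteriorAnswer A v)
    (hB : ∀ u v, G.Adj u v → posteriorAnswer B u ≠ posteriorAnswer B v) {k : Fin N}
    (hk : k ∈ A ↔ k ∈ B) : A = B := by
  have hAB := SimpleGraph.Coloring.eq_of_connected_of_apply_eq hG (v := (k, true))
    (C := .mk _ (hA _ _)) (D := .mk _ (hB _ _))
    (show posteriorAnswer A (k, true) = posteriorAnswer B (k, true) by simpa [posteriorAnswer])
  ext j
  have hj : posteriorAnswer A (j, true) = posteriorAnswer B (j, true) := DFunLike.congr_fun hAB _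
  simpa [posteriorAnswer] using hj

theorem posteriorAnswer_azz_ne_of_adj (hσ : Injective σ)
    (hσpt : ∀ v, σ (descRank N v) = pt N p ε v) {u v : Fin N × Bool}
    (huv : (Gsig N p ε σ).Adj u v) : posteriorAnswer (AZZ N) u ≠ posteriorAnswer (AZZ N) v := by
  obtain ⟨hne, huv⟩ := (gsig_adj_iff hσ hσpt).mp huv
  obtain ⟨a, _ | _⟩ := u <;> obtain ⟨c, _ | _⟩ := v <;>
    have := a.isLt <;> have := c.isLt <;>
    simp_all [posteriorAnswer, AZZ, Fin.ext_iff] <;> omega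

theorem setOf_pr_eq (hN : 2 ≤ N) (hσ : Injective σ)
    (hσpt : ∀ v, σ (descRank N v) = pt N p ε v) :
    {A | PR N p ε σ A} = {AZZ N, (AZZ N)ᶜ} := by
  have hconn := gsig_connected hN hσ hσpt
  have hZZ := fun u v => posteriorAnswer_azz_ne_of_adj (u := u) (v := v) hσ hσpt
  have hZZc : ∀ u v, (Gsig N p ε σ).Adj u v →
      posteriorAnswer (AZZ N)ᶜ u ≠ posteriorAnswer (AZZ N)ᶜ v := by
    simpa [posteriorAnswer_compl] using hZZ
  let k₀ : Fin N := ⟨0, by omega⟩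
  have hk₀ : k₀ ∈ AZZ N := by simp [AZZ, k₀]
  ext A
  simp only [Set.mem_ofPred_eq, Set.mem_insert_iff, Set.mem_singleton_iff,
    pr_iff_forall_adj hσ hσpt]
  refine ⟨fun hA => ?_, by rintro (rfl | rfl) <;> assumption⟩
  by_cases h₀ : k₀ ∈ A
  · exact .inl <| eq_of_forall_adj_posteriorAnswer_ne hconn hA hZZ (k := k₀)
      (by simp [h₀, hk₀])
  · exact .inr <| eq_of_forall_adj_posteriorAnswer_ne hconn hA hZZc (k := k₀)
      (by simp [h₀, hk₀])

end Zigzag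

theorem stmt14_general (N : ℕ) (hN : 2 ≤ N) (p : Fin N → ℝ) (hp : ∀ k, 0 < p k)
    (hpanti : StrictAnti p)
    (ε : ℝ) (hε0 : 0 < ε) (hε : ε < 1 / 2)
    (σd : Fin (2 * N) → ℝ) (hσd : StrictAnti σd) (hσr : Set.range σd = PiAll N p ε)
    (hr1 : ∀ i j : Fin N, j.1 = i.1 + 2 → p j / p i < ε / (1 - ε))
    (hr2 : ∀ i j : Fin N, j.1 = i.1 + 1 → ε / (1 - ε) < p j / p i) :
    (Gsig N p ε σd).Connected ∧
      (∀ v, ((Gsig N p ε σd).neighborSet v).ncard = 2) ∧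
      ({A : Finset (Fin N) | PR N p ε σd A} = {AZZ N, (AZZ N)ᶜ}) := by
  have hε1 : 0 < 1 - ε := by linarith
  have hT : ∀ i j : Fin N, j.1 = i.1 + 2 → (1 - ε) * p j < ε * p i := fun i j hij => by
    have := hr1 i j hij
    rw [div_lt_div_iff₀ (hp i) hε1] at this
    linarith
  have hF : ∀ i j : Fin N, j.1 = i.1 + 1 → ε * p i < (1 - ε) * p j := fun i j hij => by
    have := hr2 i j hij
    rw [div_lt_div_iff₀ hε1 (hp i)] at this
    linarith
  have hσpt := apply_descRank_eq_pt hσd hσr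
    (strictAnti_pt_comp_descEquiv_symm hN hpanti hε0 (by linarith) hT hF)
  exact ⟨gsig_connected hN hσd.injective hσpt, ncard_neighborSet_gsig hN hσd.injective hσpt,
    setOf_pr_eq hN hσd.injective hσpt⟩

/-- **(Statement 14.)** If `max_k p(k+2)/p(k) < ε/(1-ε) < min_k p(k+1)/p(k)`, then
the graph `𝒢_{σ↓}` is a single cycle on all `2N` vertices (connected and 2-regular),
and the zigzag partition is the unique optimal partition up to complementation: the
partitions that are posterior-respecting with `σ↓` are exactly `A_ZZ` and its
complement. -/
theorem stmt14 (N : ℕ) (hN : 2 ≤ N) (p : Fin N → ℝ) (hp : ∀ k, 0 < p k)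
    (hsum : ∑ k, p k = 1) (hpanti : StrictAnti p)
    (ε : ℝ) (hε0 : 0 < ε) (hε : ε < 1 / 2)
    (hinj : Function.Injective (pt N p ε))
    (σd : Fin (2 * N) → ℝ) (hσd : StrictAnti σd) (hσr : Set.range σd = PiAll N p ε)
    (hr1 : ∀ i j : Fin N, j.1 = i.1 + 2 → p j / p i < ε / (1 - ε))
    (hr2 : ∀ i j : Fin N, j.1 = i.1 + 1 → ε / (1 - ε) < p j / p i) :
    (Gsig N p ε σd).Connected ∧
      (∀ v, ((Gsig N p ε σd).neighborSet v).ncard = 2) ∧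
      ({A : Finset (Fin N) | PR N p ε σd A} = {AZZ N, (AZZ N)ᶜ}) :=
  stmt14_general N hN p hp hpanti ε hε0 hε σd hσd hσr hr1 hr2

end
end

section
/- Fix $M=3$. Given any NAE-3SAT instance with variables $x_1,\ldots,x_n$ and clauses $C_1,\ldots,C_m$, construct a system of difference modular disequations (DMDs) modulo 3 as follows: introduce integer variables $w_i,\hat w_i$ for each $x_i$, a common variable $s$, and a variable $c_j$ per clause; add disequations $w_i-s\not\equiv 0$, $\hat w_i-s\not\equiv 0$, $w_i-\hat w_i\not\equiv 0$, and for each clause $u\vee v\vee w$ the disequations $\delta(u)-c_j\not\equiv 0$, $\delta(v)-c_j\not\equiv 1$, $\delta(w)-c_j\not\equiv 2$, where $\delta(x_i)=w_i$, $\delta(\neg x_i)=\hat w_i$. Then the DMD system has a solution over $\mathbb{Z}_3$ if and only if the NAE-3SAT instance has a not-all-equal satisfying assignment. -/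
/-!
Encode `false ↦ 1` and `true ↦ 2` relative to the shared offset `s`. The variable
disequations say precisely that `w_i - s` and `ŵ_i - s` are the two distinct nonzero
residues, i.e. the codes of some bit and of its negation, so every `δ(ℓ) - s` is the code
of the literal's truth value. For a clause the three constraints forbid `c_j` from the
residues `δ(u)`, `δ(v) - 1`, `δ(w) - 2`; with all three `δ`'s in `{s + 1, s + 2}` these
exhaust `ℤ/3` exactly when the three literals have the same value.
-/

/-- The truth value of a literal `(v, s)` (`s = true` meaning the positive literal
`x_v`, `s = false` meaning `¬x_v`) under an assignment. -/
def litVal {ν : Type*} (a : ν → Bool) (l : ν × Bool) : Bool :=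
  if l.2 then a l.1 else !(a l.1)

def boolCode (b : Bool) : ZMod 3 := if b then 2 else 1

theorem var_constraints_iff (w wHat s : ZMod 3) :
    (w - s ≠ 0 ∧ wHat - s ≠ 0 ∧ w - wHat ≠ 0) ↔
      ∃ b : Bool, w = s + boolCode b ∧ wHat = s + boolCode !b := by
  revert w wHat s; decide

theorem clause_constraints_solvable_iff (s : ZMod 3) (x y z : Bool) :
    (∃ c : ZMod 3, s + boolCode x - c ≠ 0 ∧ s + boolCode y - c ≠ 1 ∧ s + boolCode z - c ≠ 2) ↔
      ¬(x = y ∧ y = z) := by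
  revert s x y z; decide

theorem ite_boolCode_eq_litVal {ν : Type*} (a : ν → Bool) (s : ZMod 3) (l : ν × Bool) :
    (if l.2 then s + boolCode (a l.1) else s + boolCode !(a l.1)) = s + boolCode (litVal a l) := by
  rcases l with ⟨v, _ | _⟩ <;> rfl

/-- **(Statement 18.)** Correctness of the reduction from NAE-3SAT to a system of
difference modular disequations (DMDs) modulo 3: introduce `w_i, wHat_i` per variable,
a common variable `s`, and `c_j` per clause, with disequations
`w_i - s ≢ 0`, `wHat_i - s ≢ 0`, `w_i - wHat_i ≢ 0`, and for each clause `u ∨ v ∨ w`: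
`δ(u) - c_j ≢ 0`, `δ(v) - c_j ≢ 1`, `δ(w) - c_j ≢ 2`, where `δ` maps a positive
literal on `x_i` to `w_i` and a negative one to `wHat_i`. The DMD system is solvable
over `ℤ/3` iff the NAE-3SAT instance has a not-all-equal satisfying assignment. -/
theorem stmt18 {ν : Type*}
    (clauses : List ((ν × Bool) × (ν × Bool) × (ν × Bool))) :
    (∃ (w wHat : ν → ZMod 3) (s : ZMod 3) (c : Fin clauses.length → ZMod 3),
      (∀ i : ν, w i - s ≠ 0 ∧ wHat i - s ≠ 0 ∧ w i - wHat i ≠ 0) ∧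
      (∀ j : Fin clauses.length,
        (fun δ : ν × Bool → ZMod 3 =>
          δ (clauses.get j).1 - c j ≠ 0 ∧
          δ (clauses.get j).2.1 - c j ≠ 1 ∧
          δ (clauses.get j).2.2 - c j ≠ 2)
        (fun l => if l.2 then w l.1 else wHat l.1))) ↔
      (∃ a : ν → Bool, ∀ cl ∈ clauses,
        ¬(litVal a cl.1 = litVal a cl.2.1 ∧ litVal a cl.2.1 = litVal a cl.2.2)) := by
  constructor
  · rintro ⟨w, wHat, s, c, hvar, hcl⟩
    choose a ha using fun v => (var_constraints_iff (w v) (wHat v) s).1 (hvar v)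
    obtain ⟨rfl, rfl⟩ :
        w = (fun v => s + boolCode (a v)) ∧ wHat = (fun v => s + boolCode !(a v)) :=
      ⟨funext fun v => (ha v).1, funext fun v => (ha v).2⟩
    refine ⟨a, fun cl hmem => ?_⟩
    obtain ⟨j, rfl⟩ := List.mem_iff_get.1 hmem
    exact (clause_constraints_solvable_iff s _ _ _).1
      ⟨c j, by simpa only [ite_boolCode_eq_litVal] using hcl j⟩
  · rintro ⟨a, ha⟩
    choose c hc using fun j : Fin clauses.length =>
      (clause_constraints_solvable_iff 0 (litVal a (clauses.get j).1) (litVal a (clauses.get j).2.1)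
        (litVal a (clauses.get j).2.2)).2 (ha _ (clauses.get_mem j))
    refine ⟨fun v => 0 + boolCode (a v), fun v => 0 + boolCode !(a v), 0, c,
      fun v => (var_constraints_iff _ _ _).2 ⟨a v, rfl, rfl⟩, fun j => ?_⟩
    simpa only [ite_boolCode_eq_litVal] using hc j
end
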